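/- arXiv:1610.09065 — 5 statements merged into one kernel-verified Lean document; each statement's English description precedes it below -/
import Mathlib

section
/- Let P(x) = a_0 + a_1 x + … + a_n x^n be a polynomial with real coefficients with a_0 ≠ 0 and a_n ≠ 0, and suppose 2m consecutive coefficients of P vanish for some integer m ≥ 1 (i.e. there is an index j with a_{j+1} = a_{j+2} = … = a_{j+2m} = 0). Then P has at least 2m non-real complex zeros, counted with multiplicity. -/
/-!
Let `i ≤ j` be the last index before the gap with `a_i ≠ 0`. Differentiating `i` times cannot
increase the number of non-real zeros (each derivative loses one degree and at most one real
zero), and yields a polynomial `A` with `A(0) ≠ 0` whose derivative vanishes to order `2m` at `0`.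
Applying Rolle's theorem on `(-∞, 0)` and on `(0, ∞)` separately, `A` has at most two more real
zeros than `A'` has nonzero real zeros, so at most `deg A - 2m + 1` real zeros. Non-real zeros
come in conjugate pairs, so `A`, and hence `P`, has at least `2m` of them.
-/

open MvPolynomial Finset

/-- The linear form `a*x + b*y` as a binary polynomial over `ℂ`. -/
noncomputable def lform (a b : ℂ) : MvPolynomial (Fin 2) ℂ := C a * X 0 + C b * X 1

/-- The `K`-rank of a binary form `p`: the least `r` such that `p` is a `K`-linear
combination of `r` d-th powers of linear forms with coefficients in `K`. -/
noncomputable def rankIn (K : Subfield ℂ) (d : ℕ) (p : MvPolynomial (Fin 2) ℂ) : ℕ :=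
  sInf {r : ℕ | ∃ lam a b : Fin r → ℂ, (∀ j, lam j ∈ K ∧ a j ∈ K ∧ b j ∈ K) ∧
    p = ∑ j, C (lam j) * lform (a j) (b j) ^ d}

/-- The Waring rank `L_ℂ` of a binary form. -/
noncomputable def rankC (d : ℕ) (p : MvPolynomial (Fin 2) ℂ) : ℕ :=
  sInf {r : ℕ | ∃ lam a b : Fin r → ℂ, p = ∑ j, C (lam j) * lform (a j) (b j) ^ d}

/-- Single partial derivative as a plain function. -/
noncomputable def pd (i : Fin 2) (p : MvPolynomial (Fin 2) ℂ) : MvPolynomial (Fin 2) ℂ :=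
  pderiv i p

/-- `apolar h p = h(D) p`, the differential operator of `h` applied to `p`. -/
noncomputable def apolar (h p : MvPolynomial (Fin 2) ℂ) : MvPolynomial (Fin 2) ℂ :=
  ∑ m ∈ h.support, h.coeff m • ((pd 0)^[m 0] ((pd 1)^[m 1] p))

/-- The subfield of `ℂ` generated by a subfield `K` and a set `S`. -/
noncomputable def adj (K : Subfield ℂ) (S : Set ℂ) : Subfield ℂ := Subfield.closure (↑K ∪ S)

/-- `z` and `w` are conjugate over `K` in `K(s)`: `z = a + b s`, `w = a - b s` with `a, b ∈ K`. -/
def conjPair (K : Subfield ℂ) (s z w : ℂ) : Prop :=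
  ∃ a b : ℂ, a ∈ K ∧ b ∈ K ∧ z = a + b * s ∧ w = a - b * s

noncomputable def lformR (a b : ℝ) : MvPolynomial (Fin 2) ℝ := C a * X 0 + C b * X 1

noncomputable def rankR (d : ℕ) (p : MvPolynomial (Fin 2) ℝ) : ℕ :=
  sInf {r : ℕ | ∃ lam a b : Fin r → ℝ, p = ∑ j, C (lam j) * lformR (a j) (b j) ^ d}

theorem Multiset.card_filter_ne_eq {α β : Type*} [LinearOrder β] (s : Multiset α) (f : α → β)
    (b : β) :
    Multiset.card (s.filter (f · ≠ b)) =
      Multiset.card (s.filter (f · < b)) + Multiset.card (s.filter (b < f ·)) := by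
  have hdisj : s.filter (fun x => f x < b ∧ b < f x) = 0 :=
    Multiset.filter_eq_nil.2 fun x _ h => lt_asymm h.1 h.2
  have hsplit := Multiset.filter_add_filter (f · < b) (b < f ·) s
  rw [hdisj, add_zero, Multiset.filter_congr fun x _ => (ne_iff_lt_or_gt (a := f x)).symm] at hsplit
  rw [← hsplit, Multiset.card_add]

namespace Polynomial

section IsAddTorsionFree

variable {R : Type*} [Semiring R] [IsAddTorsionFree R]

theorem coeff_iterate_derivative_eq_zero_iff (p : R[X]) (k i : ℕ) :
    (derivative^[k] p).coeff i = 0 ↔ p.coeff (i + k) = 0 := by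
  rw [coeff_iterate_derivative, nsmul_eq_zero_iff_right]
  exact Nat.descFactorial_eq_zero_iff_lt.not.2 (by omega)

theorem natDegree_iterate_derivative_eq (p : R[X]) (k : ℕ) :
    (derivative^[k] p).natDegree = p.natDegree - k := by
  induction k with
  | zero => rfl
  | succ k ih => rw [Function.iterate_succ_apply', natDegree_derivative, ih, Nat.sub_sub]

end IsAddTorsionFree

theorem card_roots_filter_le_derivative (s : Set ℝ) [DecidablePred (· ∈ s)] (hs : s.OrdConnected)
    (p : ℝ[X]) :
    Multiset.card (p.roots.filter (· ∈ s)) ≤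
      Multiset.card ((derivative p).roots.filter (· ∈ s)) + 1 := by
  rcases eq_or_ne (derivative p) 0 with hp' | hp'
  · rw [eq_C_of_derivative_eq_zero hp']
    simp
  have hp : p ≠ 0 := ne_of_apply_ne derivative (by rwa [derivative_zero])
  set M := p.roots.filter (· ∈ s)
  set M' := (derivative p).roots.filter (· ∈ s)
  have hM {x : ℝ} (hx : x ∈ M.toFinset) : x ∈ s ∧ p.IsRoot x := by
    simpa [M, mem_roots hp, and_comm] using hx
  have interleaved : M.toFinset.card ≤ (M'.toFinset \ M.toFinset).card + 1 := by
    refine Finset.card_le_sdiff_of_interleaved fun x hx y hy hxy _ => ?_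
    obtain ⟨hxs, hx⟩ := hM hx
    obtain ⟨hys, hy⟩ := hM hy
    obtain ⟨z, hz, hz'⟩ := exists_deriv_eq_zero hxy p.continuousOn (hx.trans hy.symm)
    refine ⟨z, ?_, hz⟩
    rw [Multiset.mem_toFinset, Multiset.mem_filter, mem_roots hp', IsRoot, ← p.deriv]
    exact ⟨hz', hs.out hxs hys (Set.Ioo_subset_Icc_self hz)⟩
  calc Multiset.card M = ∑ x ∈ M.toFinset, M.count x := (Multiset.toFinset_sum_count_eq _).symm
    _ = ∑ x ∈ M.toFinset, (p.rootMultiplicity x - 1 + 1) := by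
      refine Finset.sum_congr rfl fun x hx => ?_
      rw [Multiset.count_filter_of_pos (hM hx).1, count_roots,
        Nat.sub_add_cancel ((rootMultiplicity_pos hp).2 (hM hx).2)]
    _ = (∑ x ∈ M.toFinset, (p.rootMultiplicity x - 1)) + M.toFinset.card := by
      simp only [Finset.sum_add_distrib, Finset.card_eq_sum_ones]
    _ ≤ (∑ x ∈ M.toFinset, M'.count x) +
          ((∑ x ∈ M'.toFinset \ M.toFinset, M'.count x) + 1) := by
      grw [interleaved, Finset.card_eq_sum_ones]
      gcongr with x hx x hx
      · rw [Multiset.count_filter_of_pos (hM hx).1, count_roots]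
        exact rootMultiplicity_sub_one_le_derivative_rootMultiplicity p x
      · exact Multiset.count_pos.2 (Multiset.mem_toFinset.1 (Finset.mem_sdiff.1 hx).1)
    _ = Multiset.card M' + 1 := by
      rw [← add_assoc, ← Finset.sum_union Finset.disjoint_sdiff, Finset.union_sdiff_self_eq_union,
        ← Multiset.toFinset_sum_count_eq, ← Finset.sum_subset Finset.subset_union_right]
      intro x _ hx
      simpa only [Multiset.mem_toFinset, Multiset.count_eq_zero] using hx

noncomputable def nonrealRoots (p : ℝ[X]) : Multiset ℂ :=
  (p.map (algebraMap ℝ ℂ)).roots.filter fun z => z.im ≠ 0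

theorem roots_map_ofReal_filter_im_eq_zero (p : ℝ[X]) :
    (p.map (algebraMap ℝ ℂ)).roots.filter (fun z => z.im = 0) = p.roots.map (algebraMap ℝ ℂ) := by
  ext z
  by_cases hz : z.im = 0
  · obtain ⟨r, rfl⟩ : ∃ r : ℝ, algebraMap ℝ ℂ r = z := ⟨z.re, Complex.ext rfl hz.symm⟩
    rw [Multiset.count_filter_of_pos (p := fun z : ℂ => z.im = 0) hz,
      Multiset.count_map_eq_count' _ _ (algebraMap ℝ ℂ).injective, count_roots, count_roots]
    exact (eq_rootMultiplicity_map (algebraMap ℝ ℂ).injective _).symm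
  · rw [Multiset.count_filter_of_neg (p := fun z : ℂ => z.im = 0) hz, eq_comm,
      Multiset.count_eq_zero]
    intro hmem
    obtain ⟨r, -, rfl⟩ := Multiset.mem_map.1 hmem
    exact hz (Complex.ofReal_im r)

theorem card_roots_add_card_nonrealRoots (p : ℝ[X]) :
    Multiset.card p.roots + Multiset.card (nonrealRoots p) = p.natDegree := by
  rw [← Multiset.card_map (algebraMap ℝ ℂ), ← roots_map_ofReal_filter_im_eq_zero, nonrealRoots,
    ← Multiset.card_add, Multiset.filter_add_not, IsAlgClosed.card_roots_eq_natDegree,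
    natDegree_map]

theorem map_conj_roots_map_ofReal (p : ℝ[X]) :
    (p.map (algebraMap ℝ ℂ)).roots.map (starRingEnd ℂ) = (p.map (algebraMap ℝ ℂ)).roots := by
  rw [← (IsAlgClosed.splits _).roots_map, map_map]
  congr 2
  exact RingHom.ext Complex.conj_ofReal

theorem even_card_nonrealRoots (p : ℝ[X]) : Even (Multiset.card (nonrealRoots p)) := by
  have hlower : (p.map (algebraMap ℝ ℂ)).roots.filter (fun z => z.im < 0) =
      ((p.map (algebraMap ℝ ℂ)).roots.filter fun z => 0 < z.im).map (starRingEnd ℂ) := by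
    conv_lhs => rw [← map_conj_roots_map_ofReal p]
    rw [Multiset.filter_map]
    simp
  rw [nonrealRoots, Multiset.card_filter_ne_eq, hlower, Multiset.card_map]
  exact ⟨_, rfl⟩

theorem card_nonrealRoots_derivative_le (p : ℝ[X]) :
    Multiset.card (nonrealRoots (derivative p)) ≤ Multiset.card (nonrealRoots p) := by
  have hp := card_roots_add_card_nonrealRoots p
  have hp' := card_roots_add_card_nonrealRoots (derivative p)
  have hroots := card_roots_le_derivative p
  rw [natDegree_derivative] at hp'
  omega

theorem card_nonrealRoots_iterate_derivative_le (p : ℝ[X]) (k : ℕ) :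
    Multiset.card (nonrealRoots (derivative^[k] p)) ≤ Multiset.card (nonrealRoots p) := by
  induction k with
  | zero => rfl
  | succ k ih =>
    rw [Function.iterate_succ_apply']
    exact (card_nonrealRoots_derivative_le _).trans ih

theorem card_roots_add_count_roots_derivative_le (p : ℝ[X]) (h0 : ¬p.IsRoot 0) :
    Multiset.card p.roots + (derivative p).roots.count 0 ≤ p.natDegree + 1 := by
  have hroots : Multiset.card p.roots =
      Multiset.card (p.roots.filter (· < 0)) + Multiset.card (p.roots.filter (0 < ·)) := by
    have := Multiset.card_filter_ne_eq p.roots (fun x => x) 0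
    beta_reduce at this
    rw [← this, Multiset.filter_eq_self.2]
    rintro x hx rfl
    exact h0 (isRoot_of_mem_roots hx)
  have hroots' : Multiset.card (derivative p).roots =
      Multiset.card ((derivative p).roots.filter (· < 0)) +
        Multiset.card ((derivative p).roots.filter (0 < ·)) + (derivative p).roots.count 0 := by
    have := Multiset.card_filter_ne_eq (derivative p).roots (fun x => x) 0
    beta_reduce at this
    rw [← this, ← Multiset.card_replicate (Multiset.count _ _) (0 : ℝ), ← Multiset.filter_eq',
      ← Multiset.card_add, add_comm, Multiset.filter_add_not]
  have hneg := card_roots_filter_le_derivative (Set.Iio 0) Set.ordConnected_Iio p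
  have hpos := card_roots_filter_le_derivative (Set.Ioi 0) Set.ordConnected_Ioi p
  have hdeg' := card_roots' (derivative p)
  have hdeg := card_roots' p
  rw [natDegree_derivative] at hdeg'
  simp only [Set.mem_Iio, Set.mem_Ioi] at hneg hpos
  omega

theorem le_card_nonrealRoots_of_coeff_eq_zero (p : ℝ[X]) (m : ℕ) (h0 : p.coeff 0 ≠ 0)
    (hgap : ∀ i, 1 ≤ i → i ≤ 2 * m → p.coeff i = 0) (hdeg : 2 * m < p.natDegree) :
    2 * m ≤ Multiset.card (nonrealRoots p) := by
  have hp' : derivative p ≠ 0 := by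
    rw [Ne, derivative_eq_zero]
    omega
  have hdvd : (X : ℝ[X]) ^ (2 * m) ∣ derivative p := X_pow_dvd_iff.2 fun d hd => by
    rw [coeff_derivative, hgap (d + 1) (by omega) (by omega), zero_mul]
  have hcount : 2 * m ≤ (derivative p).roots.count 0 := by
    rw [count_roots, le_rootMultiplicity_iff hp']
    simpa using hdvd
  have hreal := card_roots_add_count_roots_derivative_le p
    (by rwa [IsRoot, ← coeff_zero_eq_eval_zero])
  have hsum := card_roots_add_card_nonrealRoots p
  obtain ⟨r, hr⟩ := even_card_nonrealRoots p
  omega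

end Polynomial

theorem gap_nonreal_roots_general (P : Polynomial ℝ) (n m j : ℕ)
    (hn : P.natDegree = n) (h0 : P.coeff 0 ≠ 0)
    (hjm : j + 2 * m < n)
    (hvan : ∀ t, 1 ≤ t → t ≤ 2 * m → P.coeff (j + t) = 0) :
    2 * m ≤ Multiset.card ((P.map (algebraMap ℝ ℂ)).roots.filter fun z => z.im ≠ 0) := by
  obtain ⟨i, hij, hi, hgap⟩ :
      ∃ i ≤ j, P.coeff i ≠ 0 ∧ ∀ t, i < t → t ≤ j + 2 * m → P.coeff t = 0 := by
    refine ⟨Nat.findGreatest (P.coeff · ≠ 0) j, Nat.findGreatest_le j,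
      Nat.findGreatest_spec (P := (P.coeff · ≠ 0)) (Nat.zero_le j) h0, fun t ht ht' => ?_⟩
    by_cases htj : t ≤ j
    · exact not_not.1 (Nat.findGreatest_is_greatest ht htj)
    · simpa [Nat.add_sub_cancel' (le_of_not_ge htj)] using hvan (t - j) (by omega) (by omega)
  refine le_trans ?_ (Polynomial.card_nonrealRoots_iterate_derivative_le P i)
  apply Polynomial.le_card_nonrealRoots_of_coeff_eq_zero
  · rwa [Ne, Polynomial.coeff_iterate_derivative_eq_zero_iff, zero_add]
  · intro t ht1 ht2
    rw [Polynomial.coeff_iterate_derivative_eq_zero_iff]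
    exact hgap _ (by omega) (by omega)
  · rw [Polynomial.natDegree_iterate_derivative_eq, hn]
    omega

/-- **Descartes-type gap theorem.** If `2m` consecutive coefficients of a real polynomial
vanish (strictly inside the coefficient range), it has at least `2m` non-real zeros,
counted with multiplicity. -/
theorem gap_nonreal_roots (P : Polynomial ℝ) (n m j : ℕ) (hm : 1 ≤ m)
    (hn : P.natDegree = n) (h0 : P.coeff 0 ≠ 0) (hnn : P.coeff n ≠ 0)
    (hjm : j + 2 * m < n)
    (hvan : ∀ t, 1 ≤ t → t ≤ 2 * m → P.coeff (j + t) = 0) :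
    2 * m ≤ Multiset.card ((P.map (algebraMap ℝ ℂ)).roots.filter fun z => z.im ≠ 0) :=
  gap_nonreal_roots_general P n m j hn h0 hjm hvan
end

section
/- Let K ⊆ ℂ be a field and let p(x,y) ∈ K[x,y] be a nonzero binary form of degree d ≥ 3 which is not a d-th power of a linear form, and suppose there exist λ_1, λ_2, α_1, α_2, β_1, β_2 ∈ ℂ with p(x,y) = λ_1(α_1 x + β_1 y)^d + λ_2(α_2 x + β_2 y)^d, this representation being honest, and L_K(p) > 2. Then there exists u ∈ K with √u ∉ K such that L_{K(√u)}(p) = 2, and the two summands are mapped to one another by the nontrivial K-automorphism of K(√u) (they are conjugates of each other over K in K(√u)). -/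
open MvPolynomial Finset

/-!
The quadratic form `Q = (b₁ x - a₁ y) (b₂ x - a₂ y)` annihilates `p` as a differential operator:
its coefficient vector is orthogonal to every row of the catalecticant matrix of `p`, whose
entries lie in `K`. Because the two linear forms are independent and `d ≥ 3`, two of these rows
are independent, so `Q` is proportional to their cross product, a form with coefficients in `K`.
Normalising it to `μ⁻¹ Q`, the numbers `P = a₁ b₂ / μ` and `R = a₂ b₁ / μ` have sum and product
in `K`, so they are conjugate in `K(√u)` for the discriminant `u = (P - R) ^ 2`.

Whenever `P` and `R` lie in a field `F ⊇ K`, both linear forms can be rescaled to have coefficients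
in `F`, and then so do the weights: evaluating `p` at the zero of one form isolates the weight of
the other. Hence `L_F(p) = 2`. For `F = K` this contradicts `L_K(p) > 2`, so `√u ∉ K`; for
`F = K(√u)` it gives the rank, and since the evaluation formula for the weights is a rational
expression over `K` in `P` and `R`, the two summands are exchanged by `√u ↦ -√u`.
-/

lemma lform_mul_mul (c a b : ℂ) : lform (c * a) (c * b) = C c * lform a b := by
  simp only [lform, map_mul]; ring

lemma C_mul_lform_pow_eq {c : ℂ} (hc : c ≠ 0) (l a b : ℂ) (d : ℕ) :
    C l * lform a b ^ d = C (l / c ^ d) * lform (c * a) (c * b) ^ d := by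
  rw [lform_mul_mul, mul_pow, ← mul_assoc, ← C_pow, ← C_mul, div_mul_cancel₀ _ (pow_ne_zero d hc)]

lemma eval_lform (x : Fin 2 → ℂ) (a b : ℂ) : eval x (lform a b) = a * x 0 + b * x 1 := by
  simp [lform]

lemma eval_twoTerm {d : ℕ} (hd : d ≠ 0) (Λ₁ Λ₂ α₁ β₁ α₂ β₂ : ℂ) :
    eval ![β₂, -α₂] (C Λ₁ * lform α₁ β₁ ^ d + C Λ₂ * lform α₂ β₂ ^ d) =
      Λ₁ * (α₁ * β₂ - β₁ * α₂) ^ d := by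
  simp only [map_add, map_mul, map_pow, eval_C, eval_lform, Matrix.cons_val_zero,
    Matrix.cons_val_one]
  rw [show α₂ * β₂ + β₂ * -α₂ = 0 by ring, zero_pow hd]
  ring

lemma coeff_lform_pow (a b : ℂ) (d : ℕ) (m : Fin 2 →₀ ℕ) :
    (lform a b ^ d).coeff m =
      if m 0 + m 1 = d then (d.choose (m 0) : ℂ) * (a ^ m 0 * b ^ m 1) else 0 := by
  rw [lform, add_pow, coeff_sum]
  simp only [mul_pow, ← C_pow, X_pow_eq_monomial, C_mul_monomial, mul_one, monomial_mul,
    ← C_eq_coe_nat, mul_comm _ (C _), coeff_monomial]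
  split_ifs with h
  · rw [Finset.sum_eq_single (m 0)]
    · rw [if_pos, show d - m 0 = m 1 by omega]
      ext i; fin_cases i <;> simp [← h]
    · intro k _ hk; rw [if_neg]; intro he; apply hk; simpa using congr($he 0)
    · intro hm; simp at hm; omega
  · refine Finset.sum_eq_zero fun k hk => if_neg fun he => h ?_
    have h0 := congr($he 0); have h1 := congr($he 1)
    simp only [Finsupp.add_apply, Finsupp.single_apply] at h0 h1
    simp at hk h0 h1; omega

lemma coeff_twoTerm_mem {K : Subfield ℂ} {d : ℕ} {p : MvPolynomial (Fin 2) ℂ}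
    (hpK : ∀ m, p.coeff m ∈ K) {l₁ l₂ a₁ b₁ a₂ b₂ : ℂ}
    (hrep : p = C l₁ * lform a₁ b₁ ^ d + C l₂ * lform a₂ b₂ ^ d) {k : ℕ} (hk : k ≤ d) :
    l₁ * (a₁ ^ k * b₁ ^ (d - k)) + l₂ * (a₂ ^ k * b₂ ^ (d - k)) ∈ K := by
  set m : Fin 2 →₀ ℕ := Finsupp.single 0 k + Finsupp.single 1 (d - k)
  have hm : p.coeff m =
      (d.choose k : ℂ) * (l₁ * (a₁ ^ k * b₁ ^ (d - k)) + l₂ * (a₂ ^ k * b₂ ^ (d - k))) := by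
    simp only [hrep, coeff_add, coeff_C_mul, coeff_lform_pow, m, Finsupp.add_apply]
    simp [Nat.add_sub_cancel' hk]
    ring
  have hchoose : (d.choose k : ℂ) ≠ 0 := Nat.cast_ne_zero.2 (Nat.choose_pos hk).ne'
  rw [← mul_div_cancel_left₀ (l₁ * _ + _) hchoose, ← hm]
  exact K.div_mem (hpK m) (natCast_mem K _)

lemma exists_pow_minor_ne_zero {a₁ b₁ a₂ b₂ : ℂ} (hD : a₁ * b₂ - a₂ * b₁ ≠ 0) {n : ℕ} (hn : n ≠ 0) :
    ∃ i ≤ n, ∃ j ≤ n,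
      a₁ ^ i * b₁ ^ (n - i) * (a₂ ^ j * b₂ ^ (n - j)) -
        a₂ ^ i * b₂ ^ (n - i) * (a₁ ^ j * b₁ ^ (n - j)) ≠ 0 := by
  by_cases hb₁ : b₁ = 0
  · have ha₁ : a₁ ≠ 0 := by rintro rfl; simp [hb₁] at hD
    have hb₂ : b₂ ≠ 0 := by rintro rfl; simp [hb₁] at hD
    refine ⟨n, le_rfl, 0, n.zero_le, ?_⟩
    simp [hb₁, hn, ha₁, hb₂]
  by_cases hb₂ : b₂ = 0
  · have ha₂ : a₂ ≠ 0 := by rintro rfl; simp [hb₂] at hD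
    refine ⟨0, n.zero_le, n, le_rfl, ?_⟩
    simp [hb₂, hn, hb₁, ha₂]
  obtain ⟨m, rfl⟩ := Nat.exists_eq_succ_of_ne_zero hn
  refine ⟨0, m.succ.zero_le, 1, by omega, ?_⟩
  have hminor : a₁ ^ 0 * b₁ ^ (m + 1 - 0) * (a₂ ^ 1 * b₂ ^ (m + 1 - 1)) -
      a₂ ^ 0 * b₂ ^ (m + 1 - 0) * (a₁ ^ 1 * b₁ ^ (m + 1 - 1)) =
      -((b₁ * b₂) ^ m * (a₁ * b₂ - a₂ * b₁)) := by
    simp only [Nat.sub_zero, Nat.add_sub_cancel, pow_zero, pow_one, one_mul]; ring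
  rw [hminor, neg_ne_zero]
  exact mul_ne_zero (pow_ne_zero _ (mul_ne_zero hb₁ hb₂)) hD

section catalecticant

open Matrix

lemma cross_mem {R S : Type*} [CommRing R] [SetLike S R] [SubringClass S R] {K : S}
    {u v : Fin 3 → R} (hu : ∀ k, u k ∈ K) (hv : ∀ k, v k ∈ K) (k : Fin 3) : (u ⨯₃ v) k ∈ K := by
  fin_cases k <;> simp only [cross_apply] <;> simp <;>
    exact sub_mem (mul_mem (hu _) (hv _)) (mul_mem (hu _) (hv _))

lemma cross_smul_add_smul {R : Type*} [CommRing R] (x y x' y' : R) (u w : Fin 3 → R) :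
    (x • u + y • w) ⨯₃ (x' • u + y' • w) = (x * y' - y * x') • (u ⨯₃ w) := by
  simp only [map_add, map_smul, LinearMap.add_apply, LinearMap.smul_apply, cross_self,
    ← cross_anticomm w u, smul_zero, smul_neg]
  module

lemma cross_veronese {R : Type*} [CommRing R] (a₁ b₁ a₂ b₂ : R) :
    ![a₁ ^ 2, a₁ * b₁, b₁ ^ 2] ⨯₃ ![a₂ ^ 2, a₂ * b₂, b₂ ^ 2] =
      (a₁ * b₂ - a₂ * b₁) • ![b₁ * b₂, -(a₁ * b₂ + a₂ * b₁), a₁ * a₂] := by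
  ext k; fin_cases k <;> simp [cross_apply] <;> ring

variable {K : Subfield ℂ} {p : MvPolynomial (Fin 2) ℂ} {l₁ l₂ a₁ b₁ a₂ b₂ : ℂ}

/-- The vector below is row `i` of the catalecticant matrix of `p`: its entries are the
coefficients of `x ^ (i + 2) y ^ (n - i)`, `x ^ (i + 1) y ^ (n + 1 - i)`, `x ^ i y ^ (n + 2 - i)`
divided by binomial coefficients. -/
lemma catalecticant_row_mem {n : ℕ} (hpK : ∀ m, p.coeff m ∈ K)
    (hrep : p = C l₁ * lform a₁ b₁ ^ (n + 2) + C l₂ * lform a₂ b₂ ^ (n + 2))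
    {i : ℕ} (hi : i ≤ n) (k : Fin 3) :
    ((l₁ * (a₁ ^ i * b₁ ^ (n - i))) • ![a₁ ^ 2, a₁ * b₁, b₁ ^ 2] +
      (l₂ * (a₂ ^ i * b₂ ^ (n - i))) • ![a₂ ^ 2, a₂ * b₂, b₂ ^ 2]) k ∈ K := by
  fin_cases k
  · convert coeff_twoTerm_mem hpK hrep (k := i + 2) (by omega) using 1
    simp [show n + 2 - (i + 2) = n - i by omega]; ring
  · convert coeff_twoTerm_mem hpK hrep (k := i + 1) (by omega) using 1
    simp [show n + 2 - (i + 1) = n - i + 1 by omega]; ring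
  · convert coeff_twoTerm_mem hpK hrep (k := i) (by omega) using 1
    simp [show n + 2 - i = n - i + 2 by omega]; ring

/-- The apolar quadratic `(b₁ x - a₁ y) (b₂ x - a₂ y)` is proportional to one with coefficients
in `K`. -/
lemma exists_apolar_div_mem {d : ℕ} (hd : 3 ≤ d) (hpK : ∀ m, p.coeff m ∈ K)
    (hrep : p = C l₁ * lform a₁ b₁ ^ d + C l₂ * lform a₂ b₂ ^ d)
    (honest : l₁ * l₂ * (a₁ * b₂ - a₂ * b₁) ≠ 0) :
    ∃ μ : ℂ, μ ≠ 0 ∧ b₁ * b₂ / μ ∈ K ∧ (a₁ * b₂ + a₂ * b₁) / μ ∈ K ∧ a₁ * a₂ / μ ∈ K := by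
  obtain ⟨n, rfl⟩ : ∃ n, d = n + 2 := ⟨d - 2, by omega⟩
  obtain ⟨i, hi, j, hj, hδ⟩ := exists_pow_minor_ne_zero (right_ne_zero_of_mul honest)
    (show n ≠ 0 by omega)
  have hw := cross_mem (catalecticant_row_mem hpK hrep hi) (catalecticant_row_mem hpK hrep hj)
  rw [cross_smul_add_smul, cross_veronese, smul_smul] at hw
  have hc : (l₁ * (a₁ ^ i * b₁ ^ (n - i)) * (l₂ * (a₂ ^ j * b₂ ^ (n - j))) -
      l₂ * (a₂ ^ i * b₂ ^ (n - i)) * (l₁ * (a₁ ^ j * b₁ ^ (n - j)))) * (a₁ * b₂ - a₂ * b₁) ≠ 0 := by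
    convert mul_ne_zero hδ honest using 1; ring
  refine ⟨_, inv_ne_zero hc, ?_, ?_, ?_⟩
  · convert hw 0 using 1; rw [div_inv_eq_mul]; simp [mul_comm]
  · convert K.neg_mem (hw 1) using 1; rw [div_inv_eq_mul]; simp; ring
  · convert hw 2 using 1; rw [div_inv_eq_mul]; simp [mul_comm]

end catalecticant

lemma sub_sq_mem {K : Subfield ℂ} {z w : ℂ} (hsum : z + w ∈ K) (hprod : z * w ∈ K) :
    (z - w) ^ 2 ∈ K := by
  rw [show (z - w) ^ 2 = (z + w) ^ 2 - 4 * (z * w) by ring]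
  exact K.sub_mem (pow_mem hsum 2) (K.mul_mem (ofNat_mem K 4) hprod)

lemma le_adj {K : Subfield ℂ} {S : Set ℂ} : K ≤ adj K S :=
  fun _ hx => Subfield.subset_closure (Or.inl hx)

lemma mem_adj {K : Subfield ℂ} {S : Set ℂ} {s : ℂ} (hs : s ∈ S) : s ∈ adj K S :=
  Subfield.subset_closure (Or.inr hs)

section twoTerm

variable {F : Subfield ℂ} {d : ℕ} {p : MvPolynomial (Fin 2) ℂ}

lemma mem_of_eq_twoTerm (hd : d ≠ 0) (hpF : ∀ m, p.coeff m ∈ F)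
    {Λ₁ Λ₂ α₁ β₁ α₂ β₂ : ℂ} (hα₁ : α₁ ∈ F) (hβ₁ : β₁ ∈ F) (hα₂ : α₂ ∈ F) (hβ₂ : β₂ ∈ F)
    (hD : α₁ * β₂ - β₁ * α₂ ≠ 0)
    (hrep : p = C Λ₁ * lform α₁ β₁ ^ d + C Λ₂ * lform α₂ β₂ ^ d) : Λ₁ ∈ F := by
  have hΛ : Λ₁ = eval ![β₂, -α₂] p / (α₁ * β₂ - β₁ * α₂) ^ d := by
    rw [hrep, eval_twoTerm hd, mul_div_cancel_right₀ _ (pow_ne_zero d hD)]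
  rw [hΛ]
  refine F.div_mem (eval_mem (fun m _ => hpF m) fun i => ?_) (pow_mem ?_ d)
  · fin_cases i
    exacts [hβ₂, F.neg_mem hα₂]
  · exact F.sub_mem (F.mul_mem hα₁ hβ₂) (F.mul_mem hβ₁ hα₂)

lemma rankIn_eq_two_of_eq_twoTerm (hd : d ≠ 0) (hp0 : p ≠ 0)
    (hnp : ¬ ∃ a b : ℂ, p = lform a b ^ d) (hpF : ∀ m, p.coeff m ∈ F)
    {Λ₁ Λ₂ α₁ β₁ α₂ β₂ : ℂ} (hα₁ : α₁ ∈ F) (hβ₁ : β₁ ∈ F) (hα₂ : α₂ ∈ F) (hβ₂ : β₂ ∈ F)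
    (hD : α₁ * β₂ - β₁ * α₂ ≠ 0)
    (hrep : p = C Λ₁ * lform α₁ β₁ ^ d + C Λ₂ * lform α₂ β₂ ^ d) : rankIn F d p = 2 := by
  have hΛ₁ := mem_of_eq_twoTerm hd hpF hα₁ hβ₁ hα₂ hβ₂ hD hrep
  have hΛ₂ := mem_of_eq_twoTerm hd hpF hα₂ hβ₂ hα₁ hβ₁ (by contrapose! hD; linear_combination -hD)
    (hrep.trans (add_comm _ _))
  have h2 : ∃ lam a b : Fin 2 → ℂ, (∀ j, lam j ∈ F ∧ a j ∈ F ∧ b j ∈ F) ∧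
      p = ∑ j, C (lam j) * lform (a j) (b j) ^ d := by
    refine ⟨![Λ₁, Λ₂], ![α₁, α₂], ![β₁, β₂], fun j => ?_, by simpa [Fin.sum_univ_two]⟩
    fin_cases j
    exacts [⟨hΛ₁, hα₁, hβ₁⟩, ⟨hΛ₂, hα₂, hβ₂⟩]
  have hmem : ∃ lam a b : Fin (rankIn F d p) → ℂ, (∀ j, lam j ∈ F ∧ a j ∈ F ∧ b j ∈ F) ∧
      p = ∑ j, C (lam j) * lform (a j) (b j) ^ d :=
    Nat.sInf_mem (s := {r | ∃ lam a b : Fin r → ℂ, (∀ j, lam j ∈ F ∧ a j ∈ F ∧ b j ∈ F) ∧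
      p = ∑ j, C (lam j) * lform (a j) (b j) ^ d}) ⟨2, h2⟩
  refine le_antisymm (Nat.sInf_le h2) ?_
  by_contra! hlt
  obtain ⟨lam, a, b, -, hp⟩ := hmem
  interval_cases h : rankIn F d p
  · exact hp0 (by simpa using hp)
  · obtain ⟨c, hc⟩ := IsAlgClosed.exists_pow_nat_eq (lam 0) (Nat.pos_of_ne_zero hd)
    exact hnp ⟨c * a 0, c * b 0, by rw [hp, Fin.sum_univ_one, lform_mul_mul, mul_pow, ← C_pow, hc]⟩

end twoTerm

section conjugatePairs

variable {K : Subfield ℂ} {s z w : ℂ}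

lemma conjPair.symm (h : conjPair K s z w) : conjPair K s w z := by
  obtain ⟨a, b, ha, hb, rfl, rfl⟩ := h
  exact ⟨a, -b, ha, K.neg_mem hb, by ring, by ring⟩

lemma conjPair.mem_of_le {F : Subfield ℂ} (h : conjPair K s z w) (hKF : K ≤ F) (hs : s ∈ F) :
    z ∈ F ∧ w ∈ F := by
  obtain ⟨a, b, ha, hb, rfl, rfl⟩ := h
  exact ⟨F.add_mem (hKF ha) (F.mul_mem (hKF hb) hs), F.sub_mem (hKF ha) (F.mul_mem (hKF hb) hs)⟩

lemma conjPair_of_sub_sq_eq (hsum : z + w ∈ K) (hsq : (z - w) ^ 2 = s ^ 2) : conjPair K s z w := by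
  have h2 : (2 : ℂ) ∈ K := ofNat_mem K 2
  have hmid : (z + w) / 2 ∈ K := K.div_mem hsum h2
  rcases sq_eq_sq_iff_eq_or_eq_neg.mp hsq with h | h
  · exact ⟨(z + w) / 2, 1 / 2, hmid, K.div_mem K.one_mem h2,
      by linear_combination h / 2, by linear_combination -h / 2⟩
  · exact ⟨(z + w) / 2, -1 / 2, hmid, K.div_mem (K.neg_mem K.one_mem) h2,
      by linear_combination h / 2, by linear_combination -h / 2⟩

def conjSubring (K : Subfield ℂ) (s : ℂ) (hs : s ^ 2 ∈ K) : Subring (ℂ × ℂ) where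
  carrier := {z | conjPair K s z.1 z.2}
  zero_mem' := ⟨0, 0, K.zero_mem, K.zero_mem, by simp, by simp⟩
  one_mem' := ⟨1, 0, K.one_mem, K.zero_mem, by simp, by simp⟩
  add_mem' := by
    rintro _ _ ⟨a, b, ha, hb, h₁, h₂⟩ ⟨a', b', ha', hb', h₁', h₂'⟩
    exact ⟨a + a', b + b', K.add_mem ha ha', K.add_mem hb hb',
      by simp [h₁, h₁']; ring, by simp [h₂, h₂']; ring⟩
  neg_mem' := by
    rintro _ ⟨a, b, ha, hb, h₁, h₂⟩
    exact ⟨-a, -b, K.neg_mem ha, K.neg_mem hb, by simp [h₁]; ring, by simp [h₂]; ring⟩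
  mul_mem' := by
    rintro _ _ ⟨a, b, ha, hb, h₁, h₂⟩ ⟨a', b', ha', hb', h₁', h₂'⟩
    exact ⟨a * a' + b * b' * s ^ 2, a * b' + b * a',
      K.add_mem (K.mul_mem ha ha') (K.mul_mem (K.mul_mem hb hb') hs),
      K.add_mem (K.mul_mem ha hb') (K.mul_mem hb ha'),
      by simp [h₁, h₁']; ring, by simp [h₂, h₂']; ring⟩

variable {hs : s ^ 2 ∈ K}

lemma mem_conjSubring {z : ℂ × ℂ} : z ∈ conjSubring K s hs ↔ conjPair K s z.1 z.2 := Iff.rfl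

lemma diag_mem_conjSubring {a : ℂ} (ha : a ∈ K) : (a, a) ∈ conjSubring K s hs :=
  ⟨a, 0, ha, K.zero_mem, by simp, by simp⟩

lemma inv_mem_conjSubring {z : ℂ × ℂ} (hz : z ∈ conjSubring K s hs) (h₁ : z.1 ≠ 0)
    (h₂ : z.2 ≠ 0) : z⁻¹ ∈ conjSubring K s hs := by
  obtain ⟨a, b, ha, hb, hz₁, hz₂⟩ := hz
  have hN : z.1 * z.2 ∈ K := by
    rw [hz₁, hz₂, show (a + b * s) * (a - b * s) = a * a - b * b * s ^ 2 by ring]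
    exact K.sub_mem (K.mul_mem ha ha) (K.mul_mem (K.mul_mem hb hb) hs)
  refine ⟨a / (z.1 * z.2), -b / (z.1 * z.2), K.div_mem ha hN, K.div_mem (K.neg_mem hb) hN, ?_, ?_⟩
  · rw [Prod.fst_inv]; field_simp; rw [hz₂]; ring
  · rw [Prod.snd_inv]; field_simp; rw [hz₁]; ring

lemma eval_mem_conjSubring {p : MvPolynomial (Fin 2) ℂ} (hpK : ∀ m, p.coeff m ∈ K)
    {x y : Fin 2 → ℂ} (hxy : ∀ i, (x i, y i) ∈ conjSubring K s hs) :
    (eval x p, eval y p) ∈ conjSubring K s hs := by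
  let diag : ℂ →+* ℂ × ℂ := (RingHom.id ℂ).prod (RingHom.id ℂ)
  have h : (eval x p, eval y p) = eval₂ diag (fun i => (x i, y i)) p := by
    ext
    · change eval x p = RingHom.fst ℂ ℂ (eval₂ diag _ p)
      rw [eval₂_comp_left, RingHom.fst_comp_prod]; rfl
    · change eval y p = RingHom.snd ℂ ℂ (eval₂ diag _ p)
      rw [eval₂_comp_left, RingHom.snd_comp_prod]; rfl
  rw [h]
  exact eval₂_mem (fun m _ => diag_mem_conjSubring (hpK m)) hxy

end conjugatePairs

section conjugateSummands

variable {K : Subfield ℂ} {s : ℂ} {d : ℕ}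

lemma conjPair_of_eq_twoTerm (hd : d ≠ 0) {p : MvPolynomial (Fin 2) ℂ}
    (hpK : ∀ m, p.coeff m ∈ K) (hs : s ^ 2 ∈ K) {Λ₁ Λ₂ P R A : ℂ} (hPR : conjPair K s P R)
    (hA : A ∈ K) (hA0 : A ≠ 0) (hne : P ≠ R)
    (hrep : p = C Λ₁ * lform P A ^ d + C Λ₂ * lform R A ^ d) : conjPair K s Λ₁ Λ₂ := by
  have hD₁ : P * A - A * R ≠ 0 := by
    rw [show P * A - A * R = A * (P - R) by ring]; exact mul_ne_zero hA0 (sub_ne_zero.2 hne)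
  have hD₂ : R * A - A * P ≠ 0 := by
    rw [show R * A - A * P = -(P * A - A * R) by ring]; exact neg_ne_zero.2 hD₁
  have hΛ₁ : Λ₁ = eval ![A, -R] p / (P * A - A * R) ^ d := by
    rw [hrep, eval_twoTerm hd, mul_div_cancel_right₀ _ (pow_ne_zero d hD₁)]
  have hΛ₂ : Λ₂ = eval ![A, -P] p / (R * A - A * P) ^ d := by
    rw [hrep, add_comm, eval_twoTerm hd, mul_div_cancel_right₀ _ (pow_ne_zero d hD₂)]
  have hPR' : (P, R) ∈ conjSubring K s hs := hPR
  have hRP : (R, P) ∈ conjSubring K s hs := hPR.symm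
  have hAA : (A, A) ∈ conjSubring K s hs := diag_mem_conjSubring hA
  have hev := eval_mem_conjSubring (x := ![A, -R]) (y := ![A, -P]) hpK
    (fun i => by fin_cases i; exacts [hAA, neg_mem hRP])
  have hden := pow_mem (sub_mem (mul_mem hPR' hAA) (mul_mem hAA hRP)) d
  have := mul_mem hev (inv_mem_conjSubring hden (pow_ne_zero d hD₁) (pow_ne_zero d hD₂))
  rw [hΛ₁, hΛ₂]
  exact mem_conjSubring.1 (by simpa [div_eq_mul_inv] using this)

lemma conjPair_coeff_C_mul_lform_pow (hs : s ^ 2 ∈ K) {Λ₁ Λ₂ α₁ α₂ β₁ β₂ : ℂ}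
    (hΛ : conjPair K s Λ₁ Λ₂) (hα : conjPair K s α₁ α₂) (hβ : conjPair K s β₁ β₂)
    (m : Fin 2 →₀ ℕ) :
    conjPair K s ((C Λ₁ * lform α₁ β₁ ^ d).coeff m) ((C Λ₂ * lform α₂ β₂ ^ d).coeff m) := by
  have hΛ' : (Λ₁, Λ₂) ∈ conjSubring K s hs := hΛ
  have hα' : (α₁, α₂) ∈ conjSubring K s hs := hα
  have hβ' : (β₁, β₂) ∈ conjSubring K s hs := hβ
  simp only [coeff_C_mul, coeff_lform_pow]
  split_ifs
  · have := mul_mem hΛ' (mul_mem (natCast_mem (conjSubring K s hs) (d.choose (m 0)))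
      (mul_mem (pow_mem hα' (m 0)) (pow_mem hβ' (m 1))))
    exact mem_conjSubring.1 (by simpa using this)
  · simpa using mem_conjSubring.1 (zero_mem (conjSubring K s hs))

end conjugateSummands

section apolarRoots

variable {d : ℕ} {p : MvPolynomial (Fin 2) ℂ} {l₁ l₂ a₁ b₁ a₂ b₂ μ : ℂ}

lemma exists_mul_mem_of_div_mem {F : Subfield ℂ} {a b a' b' : ℂ} (hμ : μ ≠ 0)
    (h' : ¬(a' = 0 ∧ b' = 0)) (h₁ : a * b' / μ ∈ F) (h₂ : b * b' / μ ∈ F)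
    (h₃ : a * a' / μ ∈ F) (h₄ : a' * b / μ ∈ F) :
    ∃ c : ℂ, c ≠ 0 ∧ c * a ∈ F ∧ c * b ∈ F := by
  by_cases hb' : b' = 0
  · have ha' : a' ≠ 0 := fun ha' => h' ⟨ha', hb'⟩
    exact ⟨a' / μ, div_ne_zero ha' hμ, by convert h₃ using 1; ring, by convert h₄ using 1; ring⟩
  · exact ⟨b' / μ, div_ne_zero hb' hμ, by convert h₁ using 1; ring, by convert h₂ using 1; ring⟩

lemma rankIn_eq_two_of_div_mem {F : Subfield ℂ} (hd : d ≠ 0) (hp0 : p ≠ 0)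
    (hnp : ¬ ∃ a b : ℂ, p = lform a b ^ d) (hpF : ∀ m, p.coeff m ∈ F)
    (hrep : p = C l₁ * lform a₁ b₁ ^ d + C l₂ * lform a₂ b₂ ^ d)
    (hD : a₁ * b₂ - a₂ * b₁ ≠ 0) (hμ : μ ≠ 0) (hP : a₁ * b₂ / μ ∈ F) (hR : a₂ * b₁ / μ ∈ F)
    (hA : b₁ * b₂ / μ ∈ F) (hC : a₁ * a₂ / μ ∈ F) : rankIn F d p = 2 := by
  have h₁ : ¬(a₁ = 0 ∧ b₁ = 0) := by rintro ⟨rfl, rfl⟩; simp at hD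
  have h₂ : ¬(a₂ = 0 ∧ b₂ = 0) := by rintro ⟨rfl, rfl⟩; simp at hD
  obtain ⟨c₁, hc₁, hca₁, hcb₁⟩ := exists_mul_mem_of_div_mem hμ h₂ hP hA hC hR
  obtain ⟨c₂, hc₂, hca₂, hcb₂⟩ := exists_mul_mem_of_div_mem hμ h₁ hR
    (mul_comm b₁ b₂ ▸ hA) (mul_comm a₁ a₂ ▸ hC) hP
  rw [C_mul_lform_pow_eq hc₁, C_mul_lform_pow_eq hc₂ l₂] at hrep
  refine rankIn_eq_two_of_eq_twoTerm hd hp0 hnp hpF hca₁ hcb₁ hca₂ hcb₂ ?_ hrep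
  rw [show c₁ * a₁ * (c₂ * b₂) - c₁ * b₁ * (c₂ * a₂) = c₁ * c₂ * (a₁ * b₂ - a₂ * b₁) by ring]
  exact mul_ne_zero (mul_ne_zero hc₁ hc₂) hD

lemma conjPair_coeff_summands {K : Subfield ℂ} {s : ℂ} (hd : d ≠ 0) (hpK : ∀ m, p.coeff m ∈ K)
    (hrep : p = C l₁ * lform a₁ b₁ ^ d + C l₂ * lform a₂ b₂ ^ d)
    (hD : a₁ * b₂ - a₂ * b₁ ≠ 0) (hμ : μ ≠ 0) (hsum : a₁ * b₂ / μ + a₂ * b₁ / μ ∈ K)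
    (hA : b₁ * b₂ / μ ∈ K) (hs : s ^ 2 ∈ K) (hsq : (a₁ * b₂ / μ - a₂ * b₁ / μ) ^ 2 = s ^ 2)
    (hsK : s ∉ K) (m : Fin 2 →₀ ℕ) :
    conjPair K s ((C l₁ * lform a₁ b₁ ^ d).coeff m) ((C l₂ * lform a₂ b₂ ^ d).coeff m) := by
  have hPR := conjPair_of_sub_sq_eq hsum hsq
  have hsub : a₁ * b₂ / μ - a₂ * b₁ / μ ∉ K := fun h => hsK <| by
    rcases sq_eq_sq_iff_eq_or_eq_neg.1 hsq with e | e
    · rwa [← e]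
    · rw [← neg_neg s, ← e]; exact K.neg_mem h
  have hb₁ : b₁ ≠ 0 := by rintro rfl; apply hsub; simpa using hsum
  have hb₂ : b₂ ≠ 0 := by rintro rfl; apply hsub; simpa using K.neg_mem hsum
  have e₁ : C l₁ * lform a₁ b₁ ^ d =
      C (l₁ / (b₂ / μ) ^ d) * lform (a₁ * b₂ / μ) (b₁ * b₂ / μ) ^ d := by
    rw [C_mul_lform_pow_eq (div_ne_zero hb₂ hμ)]; ring_nf
  have e₂ : C l₂ * lform a₂ b₂ ^ d =
      C (l₂ / (b₁ / μ) ^ d) * lform (a₂ * b₁ / μ) (b₁ * b₂ / μ) ^ d := by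
    rw [C_mul_lform_pow_eq (div_ne_zero hb₁ hμ)]; ring_nf
  rw [e₁, e₂] at hrep ⊢
  have hΛ := conjPair_of_eq_twoTerm hd hpK hs hPR hA
    (div_ne_zero (mul_ne_zero hb₁ hb₂) hμ)
    (fun h => hD (by rw [div_left_inj' hμ] at h; rw [h]; ring)) hrep
  exact conjPair_coeff_C_mul_lform_pow hs hΛ hPR ⟨_, 0, hA, K.zero_mem, by ring, by ring⟩ m

end apolarRoots

theorem rank_two_conjugate_general (K : Subfield ℂ) (d : ℕ) (hd : 3 ≤ d)
    (p : MvPolynomial (Fin 2) ℂ) (hp0 : p ≠ 0)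
    (hpK : ∀ m, p.coeff m ∈ K)
    (hnp : ¬ ∃ a b : ℂ, p = lform a b ^ d)
    (l₁ l₂ a₁ b₁ a₂ b₂ : ℂ)
    (hrep : p = C l₁ * lform a₁ b₁ ^ d + C l₂ * lform a₂ b₂ ^ d)
    (honest : l₁ * l₂ * (a₁ * b₂ - a₂ * b₁) ≠ 0)
    (hrk : 2 < rankIn K d p) :
    ∃ u ∈ K, (∀ s : ℂ, s ^ 2 = u → s ∉ K) ∧
      ∀ s : ℂ, s ^ 2 = u →
        rankIn (adj K {s}) d p = 2 ∧
        ∀ m, conjPair K s ((C l₁ * lform a₁ b₁ ^ d).coeff m)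
          ((C l₂ * lform a₂ b₂ ^ d).coeff m) := by
  have hd0 : d ≠ 0 := by omega
  have hD : a₁ * b₂ - a₂ * b₁ ≠ 0 := right_ne_zero_of_mul honest
  obtain ⟨μ, hμ, hA, hB, hC⟩ := exists_apolar_div_mem hd hpK hrep honest
  rw [add_div] at hB
  have hu : (a₁ * b₂ / μ - a₂ * b₁ / μ) ^ 2 ∈ K := by
    refine sub_sq_mem hB ?_
    convert K.mul_mem hA hC using 1; field_simp
  have hrank : ∀ F : Subfield ℂ, K ≤ F → ∀ s ∈ F, s ^ 2 = (a₁ * b₂ / μ - a₂ * b₁ / μ) ^ 2 →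
      rankIn F d p = 2 := fun F hKF s hsF hs =>
    have ⟨hP, hR⟩ := (conjPair_of_sub_sq_eq hB hs.symm).mem_of_le hKF hsF
    rankIn_eq_two_of_div_mem hd0 hp0 hnp (fun m => hKF (hpK m)) hrep hD hμ hP hR
      (hKF hA) (hKF hC)
  have hsqrt : ∀ s : ℂ, s ^ 2 = (a₁ * b₂ / μ - a₂ * b₁ / μ) ^ 2 → s ∉ K := fun s hs hsK =>
    hrk.ne' (hrank K le_rfl s hsK hs)
  refine ⟨_, hu, hsqrt, fun s hs => ⟨hrank _ le_adj s (mem_adj rfl) hs, fun m => ?_⟩⟩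
  exact conjPair_coeff_summands hd0 hpK hrep hD hμ hB hA (hs ▸ hu) hs.symm (hsqrt s hs) m

/-- If a binary form over `K` of degree `d ≥ 3`, not a `d`-th power, has an honest
representation of length 2 over `ℂ` but `K`-rank `> 2`, then its rank over `K(√u)` is `2`
for some `u ∈ K` with `√u ∉ K`, and the two summands are conjugate over `K` in `K(√u)`. -/
theorem rank_two_conjugate (K : Subfield ℂ) (d : ℕ) (hd : 3 ≤ d)
    (p : MvPolynomial (Fin 2) ℂ) (hp0 : p ≠ 0) (hph : p.IsHomogeneous d)
    (hpK : ∀ m, p.coeff m ∈ K)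
    (hnp : ¬ ∃ a b : ℂ, p = lform a b ^ d)
    (l₁ l₂ a₁ b₁ a₂ b₂ : ℂ)
    (hrep : p = C l₁ * lform a₁ b₁ ^ d + C l₂ * lform a₂ b₂ ^ d)
    (honest : l₁ * l₂ * (a₁ * b₂ - a₂ * b₁) ≠ 0)
    (hrk : 2 < rankIn K d p) :
    ∃ u ∈ K, (∀ s : ℂ, s ^ 2 = u → s ∉ K) ∧
      ∀ s : ℂ, s ^ 2 = u →
        rankIn (adj K {s}) d p = 2 ∧
        ∀ m, conjPair K s ((C l₁ * lform a₁ b₁ ^ d).coeff m)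
          ((C l₂ * lform a₂ b₂ ^ d).coeff m) :=
  rank_two_conjugate_general K d hd p hp0 hpK hnp l₁ l₂ a₁ b₁ a₂ b₂ hrep honest hrk
end

section
/- Let γ ∈ ℚ with √γ ∉ ℚ, let d ≥ 3, and let p_d(x,y) = Σ_{0 ≤ 2i ≤ d} (d choose 2i) γ^i x^{d−2i} y^{2i}. Then p_d(x,y) = (1/2)(x + √γ y)^d + (1/2)(x − √γ y)^d, L_ℂ(p_d) = 2, this is (up to order and scaling of the linear forms) the unique representation of p_d of length 2, and for a field K with ℚ ⊆ K ⊆ ℂ one has L_K(p_d) = 2 if and only if √γ ∈ K. -/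
open MvPolynomial Finset

/-! Any decomposition `p = Σ λⱼ (aⱼ x + bⱼ y)^d` determines the moments `Σ λⱼ aⱼ^(d-t) bⱼ^t`,
which are the coefficients of `p` divided by binomial coefficients; for `p_d` they begin
`1, 0, γ, 0`. With two terms and `d ≥ 3` these four moments already force the ratios `bⱼ / aⱼ`
to be the two square roots of `γ`. Padding a one-term decomposition with the term `0 · x^d`
would produce the ratio `0`, so the rank is 2; over `K`, the ratio `b₀ / a₀` is a square root
of `γ` lying in `K`. -/

theorem Finset.sum_range_div_two_succ_two_mul {M : Type*} [AddCommMonoid M] (n : ℕ) (f : ℕ → M) :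
    ∑ i ∈ range (n / 2 + 1), f (2 * i) = ∑ k ∈ range (n + 1) with Even k, f k := by
  rw [← sum_image fun i _ j _ (h : 2 * i = 2 * j) => by omega]
  congr 1
  ext k
  simp only [mem_image, mem_range, mem_filter, even_iff_two_dvd]
  constructor
  · rintro ⟨i, hi, rfl⟩
    exact ⟨by omega, dvd_mul_right 2 i⟩
  · rintro ⟨hk, i, rfl⟩
    exact ⟨i, by omega, rfl⟩

theorem C_mul_X_pow_mul_X_pow (c : ℂ) (m k : ℕ) :
    C c * X 0 ^ m * X 1 ^ k
      = monomial (Finsupp.single (0 : Fin 2) m + Finsupp.single 1 k) c := by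
  rw [X_pow_eq_monomial, X_pow_eq_monomial, ← monomial_zero', monomial_mul, monomial_mul]
  simp

theorem lform_pow_eq_sum_monomial (a b : ℂ) (n : ℕ) :
    lform a b ^ n = ∑ k ∈ range (n + 1),
      monomial (Finsupp.single 0 (n - k) + Finsupp.single 1 k)
        (n.choose k * a ^ (n - k) * b ^ k) := by
  rw [lform, add_comm, add_pow]
  refine sum_congr rfl fun k _ => ?_
  rw [← C_mul_X_pow_mul_X_pow, mul_pow, mul_pow, ← C_pow, ← C_pow, ← C_eq_coe_nat, C_mul, C_mul]
  ring

theorem coeff_C_mul_lform_pow (c a b : ℂ) {n t : ℕ} (ht : t ≤ n) :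
    coeff (Finsupp.single 0 (n - t) + Finsupp.single 1 t) (C c * lform a b ^ n)
      = c * n.choose t * a ^ (n - t) * b ^ t := by
  have hinj : ∀ {k}, Finsupp.single (0 : Fin 2) (n - k) + Finsupp.single 1 k
      = Finsupp.single 0 (n - t) + Finsupp.single 1 t ↔ k = t := by
    intro k
    refine ⟨fun h => by simpa using DFunLike.congr_fun h 1, fun h => h ▸ rfl⟩
  rw [coeff_C_mul, lform_pow_eq_sum_monomial, coeff_sum,
    sum_eq_single_of_mem t (mem_range.2 (by omega)) fun k _ hk => ?_, coeff_monomial,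
    if_pos rfl]
  · ring
  · rw [coeff_monomial, if_neg (hinj.not.2 hk)]

noncomputable def halfSumPow (d : ℕ) (g : ℂ) : MvPolynomial (Fin 2) ℂ :=
  C (1 / 2 : ℂ) * lform 1 g ^ d + C (1 / 2 : ℂ) * lform 1 (-g) ^ d

theorem half_add_neg_pow (g : ℂ) (k : ℕ) :
    (g ^ k + (-g) ^ k) / 2 = if Even k then g ^ k else 0 := by
  split_ifs with hk
  · rw [hk.neg_pow]; ring
  · rw [(Nat.not_even_iff_odd.1 hk).neg_pow]; ring

theorem sum_choose_two_mul_eq_halfSumPow {γ g : ℂ} (hg : g ^ 2 = γ) (d : ℕ) :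
    ∑ i ∈ range (d / 2 + 1), C ((d.choose (2 * i) : ℂ) * γ ^ i) * X 0 ^ (d - 2 * i) * X 1 ^ (2 * i)
      = halfSumPow d g := by
  let m : ℕ → Fin 2 →₀ ℕ := fun k => Finsupp.single 0 (d - k) + Finsupp.single 1 k
  calc _ = ∑ k ∈ range (d + 1) with Even k, monomial (m k) (d.choose k * g ^ k) := by
        rw [← sum_range_div_two_succ_two_mul]
        refine sum_congr rfl fun i _ => ?_
        rw [C_mul_X_pow_mul_X_pow, pow_mul, hg]
    _ = ∑ k ∈ range (d + 1), if Even k then monomial (m k) (d.choose k * g ^ k) else 0 :=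
        sum_filter _ _
    _ = halfSumPow d g := by
        rw [halfSumPow, lform_pow_eq_sum_monomial, lform_pow_eq_sum_monomial, mul_sum, mul_sum,
          ← sum_add_distrib]
        refine sum_congr rfl fun k _ => ?_
        rw [C_mul_monomial, C_mul_monomial, ← map_add, ← (monomial _).map_zero, ← apply_ite,
          ← mul_zero (d.choose k : ℂ), ← apply_ite, ← half_add_neg_pow]
        congr 1
        ring

theorem coeff_sum_C_mul_lform_pow {ι : Type*} [Fintype ι] (lam a b : ι → ℂ) {n t : ℕ}
    (ht : t ≤ n) :
    coeff (Finsupp.single 0 (n - t) + Finsupp.single 1 t) (∑ j, C (lam j) * lform (a j) (b j) ^ n)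
      = n.choose t * ∑ j, lam j * a j ^ (n - t) * b j ^ t := by
  simp only [coeff_sum, coeff_C_mul_lform_pow _ _ _ ht, mul_sum]
  exact sum_congr rfl fun j _ => by ring

theorem moment_eq_of_halfSumPow_eq {ι : Type*} [Fintype ι] {d : ℕ} {g : ℂ} {lam a b : ι → ℂ}
    (h : halfSumPow d g = ∑ j, C (lam j) * lform (a j) (b j) ^ d) {t : ℕ} (ht : t ≤ d) :
    ∑ j, lam j * a j ^ (d - t) * b j ^ t = (g ^ t + (-g) ^ t) / 2 := by
  have hcoeff := congrArg (coeff (Finsupp.single 0 (d - t) + Finsupp.single 1 t)) h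
  rw [coeff_sum_C_mul_lform_pow _ _ _ ht, halfSumPow, coeff_add, coeff_C_mul_lform_pow _ _ _ ht,
    coeff_C_mul_lform_pow _ _ _ ht] at hcoeff
  refine mul_left_cancel₀ (Nat.cast_ne_zero.2 (Nat.choose_pos ht).ne') (hcoeff.symm.trans ?_)
  ring

theorem exists_sq_eq_of_moments {d : ℕ} (hd : 3 ≤ d) {g : ℂ} (hg : g ≠ 0) {lam a b : Fin 2 → ℂ}
    (hm : ∀ t ≤ d, ∑ j, lam j * a j ^ (d - t) * b j ^ t = (g ^ t + (-g) ^ t) / 2) :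
    ∃ s, s ^ 2 = g ^ 2 ∧ a 0 ≠ 0 ∧ a 1 ≠ 0 ∧ b 0 = s * a 0 ∧ b 1 = -s * a 1 := by
  obtain ⟨e, rfl⟩ : ∃ e, d = e + 3 := ⟨d - 3, by omega⟩
  have M0 := hm 0 (by omega)
  have M1 := hm 1 (by omega)
  have M2 := hm 2 (by omega)
  have M3 := hm 3 (by omega)
  simp only [Fin.sum_univ_two, Nat.sub_zero, show e + 3 - 1 = e + 2 by omega,
    show e + 3 - 2 = e + 1 by omega, show e + 3 - 3 = e by omega] at M0 M1 M2 M3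
  have hg2 : g ^ 2 ≠ 0 := pow_ne_zero 2 hg
  -- a single power `λ (αx + βy)^d` has vanishing Hankel determinant `m₀ m₂ - m₁²`
  have ha0 : a 0 ≠ 0 := by
    intro h0
    simp only [h0, zero_pow (Nat.succ_ne_zero _), mul_zero, zero_mul, zero_add] at M0 M1 M2
    refine hg2 ?_
    linear_combination (-(g ^ 2)) * M0 + lam 1 * a 1 ^ (e + 2) * b 1 * M1 -
      lam 1 * a 1 ^ (e + 3) * M2
  have ha1 : a 1 ≠ 0 := by
    intro h1
    simp only [h1, zero_pow (Nat.succ_ne_zero _), mul_zero, zero_mul, add_zero] at M0 M1 M2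
    refine hg2 ?_
    linear_combination (-(g ^ 2)) * M0 + lam 0 * a 0 ^ (e + 2) * b 0 * M1 -
      lam 0 * a 0 ^ (e + 3) * M2
  -- the binary quadratic `(a₀y - b₀x)(a₁y - b₁x)` annihilates the moment sequence
  have hprod : a 0 * a 1 * g ^ 2 + b 0 * b 1 = 0 := by
    linear_combination -(a 0 * a 1) * M2 + (a 0 * b 1 + a 1 * b 0) * M1 - b 0 * b 1 * M0
  have hsum : a 0 * b 1 + a 1 * b 0 = 0 := by
    refine (mul_eq_zero.1 ?_).resolve_right hg2
    linear_combination (a 0 * a 1) * M3 - (a 0 * b 1 + a 1 * b 0) * M2 + b 0 * b 1 * M1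
  refine ⟨b 0 / a 0, ?_, ha0, ha1, (div_mul_cancel₀ _ ha0).symm, ?_⟩
  · field_simp
    refine mul_left_cancel₀ ha1 ?_
    linear_combination b 0 * hsum - a 0 * hprod
  · field_simp
    linear_combination hsum

theorem exists_perm_of_halfSumPow_eq {d : ℕ} (hd : 3 ≤ d) {g : ℂ} (hg : g ≠ 0)
    {lam a b : Fin 2 → ℂ} (h : halfSumPow d g = ∑ j, C (lam j) * lform (a j) (b j) ^ d) :
    ∃ σ : Equiv.Perm (Fin 2), ∀ j, ∃ c : ℂ, c ≠ 0 ∧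
      a j = c ∧ b j = c * (if σ j = 0 then g else -g) := by
  obtain ⟨s, hs, ha0, ha1, hb0, hb1⟩ :=
    exists_sq_eq_of_moments hd hg fun t ht => moment_eq_of_halfSumPow_eq h ht
  rcases sq_eq_sq_iff_eq_or_eq_neg.1 hs with rfl | rfl
  · refine ⟨1, Fin.forall_fin_two.2 ⟨⟨a 0, ha0, rfl, ?_⟩, ⟨a 1, ha1, rfl, ?_⟩⟩⟩ <;>
      simp [hb0, hb1, mul_comm]
  · refine ⟨Equiv.swap 0 1, Fin.forall_fin_two.2 ⟨⟨a 0, ha0, rfl, ?_⟩, ⟨a 1, ha1, rfl, ?_⟩⟩⟩ <;>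
      simp [hb0, hb1, mul_comm]

def HasDecompIn (K : Subfield ℂ) (d : ℕ) (p : MvPolynomial (Fin 2) ℂ) (r : ℕ) : Prop :=
  ∃ lam a b : Fin r → ℂ, (∀ j, lam j ∈ K ∧ a j ∈ K ∧ b j ∈ K) ∧
    p = ∑ j, C (lam j) * lform (a j) (b j) ^ d

theorem HasDecompIn.exists_pad_succ {K : Subfield ℂ} {d : ℕ} {p : MvPolynomial (Fin 2) ℂ} {r : ℕ}
    (h : HasDecompIn K d p r) :
    ∃ lam a b : Fin (r + 1) → ℂ, (∀ j, lam j ∈ K ∧ a j ∈ K ∧ b j ∈ K) ∧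
      p = ∑ j, C (lam j) * lform (a j) (b j) ^ d ∧ a 0 = 1 ∧ b 0 = 0 := by
  obtain ⟨lam, a, b, hK, rfl⟩ := h
  refine ⟨Fin.cons 0 lam, Fin.cons 1 a, Fin.cons 0 b,
    Fin.forall_fin_succ.2 ⟨⟨zero_mem K, one_mem K, zero_mem K⟩, hK⟩, ?_, rfl, rfl⟩
  simp [Fin.sum_univ_succ]

theorem HasDecompIn.mono {K : Subfield ℂ} {d : ℕ} {p : MvPolynomial (Fin 2) ℂ} {r n : ℕ}
    (h : HasDecompIn K d p r) (hrn : r ≤ n) : HasDecompIn K d p n := by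
  induction n, hrn using Nat.le_induction with
  | base => exact h
  | succ n _ ih =>
    obtain ⟨lam, a, b, hK, hp, -⟩ := ih.exists_pad_succ
    exact ⟨lam, a, b, hK, hp⟩

theorem rankIn_eq_succ_iff {K : Subfield ℂ} {d : ℕ} {p : MvPolynomial (Fin 2) ℂ} (k : ℕ) :
    rankIn K d p = k + 1 ↔ HasDecompIn K d p (k + 1) ∧ ¬ HasDecompIn K d p k :=
  Nat.sInf_upward_closed_eq_succ_iff (fun _ _ hrn h => HasDecompIn.mono h hrn) k

theorem rankC_eq_rankIn_top (d : ℕ) (p : MvPolynomial (Fin 2) ℂ) : rankC d p = rankIn ⊤ d p := by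
  simp [rankC, rankIn]

theorem not_hasDecompIn_one_halfSumPow {K : Subfield ℂ} {d : ℕ} (hd : 3 ≤ d) {g : ℂ}
    (hg : g ≠ 0) : ¬ HasDecompIn K d (halfSumPow d g) 1 := by
  intro h
  obtain ⟨lam, a, b, -, hrep, ha, hb⟩ := h.exists_pad_succ
  obtain ⟨σ, hσ⟩ := exists_perm_of_halfSumPow_eq hd hg hrep
  obtain ⟨c, -, rfl, hc⟩ := hσ 0
  rw [hb, ha, one_mul] at hc
  split_ifs at hc
  · exact hg hc.symm
  · exact hg (neg_eq_zero.1 hc.symm)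

theorem hasDecompIn_two_halfSumPow_iff {K : Subfield ℂ} {d : ℕ} (hd : 3 ≤ d) {g : ℂ}
    (hg : g ≠ 0) : HasDecompIn K d (halfSumPow d g) 2 ↔ ∃ s ∈ K, s ^ 2 = g ^ 2 := by
  constructor
  · rintro ⟨lam, a, b, hK, hrep⟩
    obtain ⟨s, hs, ha0, -, hb0, -⟩ :=
      exists_sq_eq_of_moments hd hg fun t ht => moment_eq_of_halfSumPow_eq hrep ht
    refine ⟨b 0 / a 0, div_mem (hK 0).2.2 (hK 0).2.1, ?_⟩
    rwa [hb0, mul_div_cancel_right₀ _ ha0]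
  · rintro ⟨s, hsK, hs⟩
    have hhalf : (1 / 2 : ℂ) ∈ K := div_mem (one_mem K) (ofNat_mem K 2)
    refine ⟨![1 / 2, 1 / 2], ![1, 1], ![s, -s], Fin.forall_fin_two.2
      ⟨⟨hhalf, one_mem K, hsK⟩, ⟨hhalf, one_mem K, neg_mem hsK⟩⟩, ?_⟩
    rw [← sum_choose_two_mul_eq_halfSumPow rfl, sum_choose_two_mul_eq_halfSumPow hs]
    simp [halfSumPow, Fin.sum_univ_two]

theorem rankIn_halfSumPow_eq_two_iff (K : Subfield ℂ) {d : ℕ} (hd : 3 ≤ d) {g : ℂ}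
    (hg : g ≠ 0) : rankIn K d (halfSumPow d g) = 2 ↔ ∃ s ∈ K, s ^ 2 = g ^ 2 := by
  rw [rankIn_eq_succ_iff 1, hasDecompIn_two_halfSumPow_iff hd hg]
  exact and_iff_left (not_hasDecompIn_one_halfSumPow hd hg)

/-- For `γ ∈ ℚ` with no rational square root and `g` a complex square root of `γ`,
the form `p_d = Σ (d choose 2i) γ^i x^(d-2i) y^(2i)` equals
`(1/2)(x + g y)^d + (1/2)(x - g y)^d`, has Waring rank 2, this length-2 representation
is unique up to order and scaling, and for any subfield `K ⊆ ℂ`, `L_K(p_d) = 2` iff a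
square root of `γ` lies in `K`. -/
theorem rational_rank_two_example (γ : ℚ) (hγ : ¬ ∃ q : ℚ, q ^ 2 = γ)
    (d : ℕ) (hd : 3 ≤ d) (g : ℂ) (hg : g ^ 2 = (γ : ℂ))
    (p : MvPolynomial (Fin 2) ℂ)
    (hp : p = ∑ i ∈ range (d / 2 + 1),
      C ((d.choose (2 * i) : ℂ) * (γ : ℂ) ^ i) * X 0 ^ (d - 2 * i) * X 1 ^ (2 * i)) :
    p = C (1 / 2 : ℂ) * lform 1 g ^ d + C (1 / 2 : ℂ) * lform 1 (-g) ^ d ∧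
    rankC d p = 2 ∧
    (∀ lam a b : Fin 2 → ℂ, p = ∑ j, C (lam j) * lform (a j) (b j) ^ d →
      ∃ σ : Equiv.Perm (Fin 2), ∀ j, ∃ c : ℂ, c ≠ 0 ∧
        a j = c ∧ b j = c * (if σ j = 0 then g else -g)) ∧
    (∀ K : Subfield ℂ, rankIn K d p = 2 ↔ (∃ s ∈ K, s ^ 2 = (γ : ℂ))) := by
  have hp' : p = halfSumPow d g := hp.trans (sum_choose_two_mul_eq_halfSumPow hg d)
  have hg0 : g ≠ 0 := by
    rintro rfl
    exact hγ ⟨0, by exact_mod_cast hg⟩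
  have hrank (K : Subfield ℂ) : rankIn K d p = 2 ↔ ∃ s ∈ K, s ^ 2 = (γ : ℂ) := by
    rw [hp', rankIn_halfSumPow_eq_two_iff K hd hg0, hg]
  refine ⟨hp', ?_, fun lam a b h => exists_perm_of_halfSumPow_eq hd hg0 (hp' ▸ h), hrank⟩
  rw [rankC_eq_rankIn_top, hrank]
  exact ⟨g, Subfield.mem_top g, hg⟩
end

section
/- Let f(x,y) ∈ ℂ[x,y] be a binary form of degree d ≥ m+1 of the shape f(x,y) = y^m g(x,y) with m ≥ 1 and y ∤ g(x,y). Then every binary form h of degree m with h(D)f = 0 is divisible by x^2; in particular, no form in (f^⊥)_m is square-free and f admits no representation as a sum of m d-th powers of linear forms. -/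
open MvPolynomial Finset

/-!
Only monomials `y^b` with `b ≥ m` occur in `f = y^m g`, while `g` contains `x^(d-m)` because
`y ∤ g`. The coefficient of `x^a y^b` in `h(D) f` is `∑_μ c_μ h_μ f_{(a,b)+μ}` with positive
integers `c_μ`; at `x^(d-m)` only `μ = y^m` survives, and at `x^(d-m-1) y` only `μ = y^m`
and `μ = x y^(m-1)`. So `h_{y^m}` and then `h_{x y^(m-1)}` vanish, which for a form of degree `m`
means `x² ∣ h`.

Conversely, if `f = ∑_{j<m} λ_j ℓ_j^d`, the product of the forms `b_j x - a_j y` dual to the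
`ℓ_j = a_j x + b_j y` with `a_j ≠ 0`, padded by `x y^e` when some `a_j` vanish (then `∂_x` kills
`ℓ_j^d = (b_j y)^d`), is a degree-`m` form apolar to `f`. It is not divisible by `x²`: it has at
most the one factor `x`, and the dual forms do not vanish at `(0, 1)`.
-/

namespace MvPolynomial

variable {σ R : Type*} [CommSemiring R]

theorem coeff_iterate_pderiv (i : σ) (k : ℕ) (ν : σ →₀ ℕ) (p : MvPolynomial σ R) :
    coeff ν ((pderiv i)^[k] p) = coeff (ν + Finsupp.single i k) p * (ν i + k).descFactorial k := by
  induction k generalizing p with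
  | zero => simp
  | succ k ih =>
    rw [Function.iterate_succ_apply, ih, coeff_pderiv, add_assoc, ← Finsupp.single_add,
      Finsupp.add_apply, Finsupp.single_eq_same, ← add_assoc, Nat.succ_descFactorial_succ]
    push_cast
    ring

theorem commute_pderiv (i j : σ) :
    Commute (pderiv i (R := R)).toLinearMap (pderiv j).toLinearMap := by
  classical
  rcases eq_or_ne i j with rfl | hij
  · rfl
  refine LinearMap.ext fun p => ?_
  ext ν
  rw [Module.End.mul_apply, Module.End.mul_apply, Derivation.coeFn_coe, Derivation.coeFn_coe]
  simp only [coeff_pderiv, Finsupp.add_apply, Finsupp.single_apply, if_neg hij, if_neg hij.symm,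
    add_zero, add_right_comm ν]
  ring

theorem X_pow_dvd_of_le_apply {i : σ} {k : ℕ} {p : MvPolynomial σ R}
    (h : ∀ μ ∈ p.support, k ≤ μ i) : X i ^ k ∣ p := by
  rw [p.as_sum]
  refine Finset.dvd_sum fun μ hμ => ?_
  rw [X_pow_eq_monomial, monomial_dvd_monomial]
  exact ⟨Or.inr (Finsupp.single_le_iff.mpr (h μ hμ)), one_dvd _⟩

theorem not_X_dvd_of_eval_ne_zero {i : σ} {v : σ → R} (hv : v i = 0) {p : MvPolynomial σ R}
    (hp : eval v p ≠ 0) : ¬ X i ∣ p := by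
  rintro ⟨q, rfl⟩
  exact hp (by rw [map_mul, eval_X, hv, zero_mul])

theorem coeff_X_pow_mul_of_lt {i : σ} {m : ℕ} {ν : σ →₀ ℕ} (p : MvPolynomial σ R) (h : ν i < m) :
    coeff ν (X i ^ m * p) = 0 := by
  rw [X_pow_eq_monomial, coeff_monomial_mul', if_neg]
  rwa [Finsupp.single_le_iff, not_le]

theorem coeff_add_single_X_pow_mul (i : σ) (m : ℕ) (ν : σ →₀ ℕ) (p : MvPolynomial σ R) :
    coeff (ν + Finsupp.single i m) (X i ^ m * p) = coeff ν p := by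
  rw [X_pow_eq_monomial, coeff_monomial_mul', if_pos le_add_self, add_tsub_cancel_right, one_mul]

end MvPolynomial

theorem Finsupp.fin_two_ext {μ ν : Fin 2 →₀ ℕ} (h₀ : μ 0 = ν 0) (h₁ : μ 1 = ν 1) : μ = ν := by
  ext j
  fin_cases j
  exacts [h₀, h₁]

theorem Finsupp.fin_two_eq (μ : Fin 2 →₀ ℕ) :
    μ = Finsupp.single 0 (μ 0) + Finsupp.single 1 (μ 1) :=
  Finsupp.fin_two_ext (by simp) (by simp)

namespace MvPolynomial.IsHomogeneous

variable {R : Type*} [CommSemiring R] {g : MvPolynomial (Fin 2) R} {n : ℕ}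

theorem apply_zero_add_apply_one (hg : g.IsHomogeneous n) {μ : Fin 2 →₀ ℕ}
    (hμ : μ ∈ g.support) : μ 0 + μ 1 = n := by
  rw [← Fin.sum_univ_two, ← Finsupp.degree_eq_sum, Finsupp.degree_eq_weight_one]
  exact hg (mem_support_iff.mp hμ)

theorem coeff_single_zero_ne_zero (hg : g.IsHomogeneous n) (hgy : ¬ X 1 ∣ g) :
    coeff (Finsupp.single 0 n) g ≠ 0 := by
  refine fun hg₀ => hgy (pow_one (X 1 : MvPolynomial (Fin 2) R) ▸ X_pow_dvd_of_le_apply ?_)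
  intro μ hμ
  by_contra! hμ₁
  have hdeg := hg.apply_zero_add_apply_one hμ
  have : μ = Finsupp.single 0 n := Finsupp.fin_two_ext (by simp; omega) (by simp; omega)
  exact mem_support_iff.mp hμ (this ▸ hg₀)

end MvPolynomial.IsHomogeneous

namespace Apolarity

noncomputable def monomialOp (μ : Fin 2 →₀ ℕ) : Module.End ℂ (MvPolynomial (Fin 2) ℂ) :=
  (pderiv 0).toLinearMap ^ μ 0 * (pderiv 1).toLinearMap ^ μ 1

noncomputable def apolarOp (h : MvPolynomial (Fin 2) ℂ) : Module.End ℂ (MvPolynomial (Fin 2) ℂ) :=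
  ∑ μ ∈ h.support, h.coeff μ • monomialOp μ

theorem apolar_eq_apolarOp (h p : MvPolynomial (Fin 2) ℂ) : apolar h p = apolarOp h p := by
  simp only [apolar, apolarOp, monomialOp, LinearMap.sum_apply, LinearMap.smul_apply,
    Module.End.mul_apply, Module.End.pow_apply, Derivation.coeFn_coe]
  rfl

theorem monomialOp_add (μ ν : Fin 2 →₀ ℕ) :
    monomialOp (μ + ν) = monomialOp μ * monomialOp ν := by
  simp only [monomialOp, Finsupp.add_apply, pow_add]
  exact ((commute_pderiv 0 1).pow_pow (ν 0) (μ 1)).mul_mul_mul_comm _ _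

theorem coeff_monomialOp (μ ν : Fin 2 →₀ ℕ) (p : MvPolynomial (Fin 2) ℂ) :
    coeff ν (monomialOp μ p) = coeff (ν + μ) p *
      ((ν 0 + μ 0).descFactorial (μ 0) * (ν 1 + μ 1).descFactorial (μ 1) : ℕ) := by
  rw [monomialOp, Module.End.mul_apply, Module.End.pow_apply, Module.End.pow_apply,
    Derivation.coeFn_coe, Derivation.coeFn_coe, coeff_iterate_pderiv, coeff_iterate_pderiv]
  simp only [Finsupp.add_apply, Finsupp.single_eq_of_ne (show (1 : Fin 2) ≠ 0 by decide),
    add_zero]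
  rw [add_assoc, ← Finsupp.fin_two_eq]
  push_cast
  ring

theorem apolarOp_monomial (μ : Fin 2 →₀ ℕ) (c : ℂ) :
    apolarOp (monomial μ c) = c • monomialOp μ := by
  classical
  rcases eq_or_ne c 0 with rfl | hc
  · simp [apolarOp]
  · rw [apolarOp, support_monomial, if_neg hc, sum_singleton, coeff_monomial, if_pos rfl]

theorem apolarOp_eq_sum_of_support_subset (h : MvPolynomial (Fin 2) ℂ)
    {s : Finset (Fin 2 →₀ ℕ)} (hs : h.support ⊆ s) :
    apolarOp h = ∑ μ ∈ s, h.coeff μ • monomialOp μ :=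
  sum_subset hs fun μ _ hμ => by rw [notMem_support_iff.mp hμ, zero_smul]

theorem apolarOp_add (h₁ h₂ : MvPolynomial (Fin 2) ℂ) :
    apolarOp (h₁ + h₂) = apolarOp h₁ + apolarOp h₂ := by
  classical
  rw [apolarOp_eq_sum_of_support_subset _ support_add,
    apolarOp_eq_sum_of_support_subset h₁ subset_union_left,
    apolarOp_eq_sum_of_support_subset h₂ subset_union_right, ← sum_add_distrib]
  simp only [coeff_add, add_smul]

theorem apolarOp_mul (h₁ h₂ : MvPolynomial (Fin 2) ℂ) :
    apolarOp (h₁ * h₂) = apolarOp h₁ * apolarOp h₂ := by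
  induction h₁ using MvPolynomial.induction_on' generalizing h₂ with
  | add a b iha ihb => rw [add_mul, apolarOp_add, iha, ihb, apolarOp_add, add_mul]
  | monomial μ c =>
    induction h₂ using MvPolynomial.induction_on' with
    | add a b iha ihb => rw [mul_add, apolarOp_add, iha, ihb, apolarOp_add, mul_add]
    | monomial ν e =>
      rw [monomial_mul, apolarOp_monomial, apolarOp_monomial, apolarOp_monomial, monomialOp_add,
        smul_mul_smul_comm]

theorem apolar_mul (h₁ h₂ p : MvPolynomial (Fin 2) ℂ) :
    apolar (h₁ * h₂) p = apolar h₁ (apolar h₂ p) := by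
  simp only [apolar_eq_apolarOp, apolarOp_mul, Module.End.mul_apply]

theorem apolar_eq_zero_of_dvd {h₁ h p : MvPolynomial (Fin 2) ℂ} (hdvd : h₁ ∣ h)
    (h₁p : apolar h₁ p = 0) : apolar h p = 0 := by
  obtain ⟨c, rfl⟩ := hdvd
  rw [mul_comm, apolar_mul, h₁p, apolar_eq_apolarOp, map_zero]

theorem apolar_sum_C_mul_eq_zero {ι : Type*} {s : Finset ι} {h : MvPolynomial (Fin 2) ℂ}
    (lam : ι → ℂ) {q : ι → MvPolynomial (Fin 2) ℂ} (hq : ∀ j ∈ s, apolar h (q j) = 0) :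
    apolar h (∑ j ∈ s, C (lam j) * q j) = 0 := by
  rw [apolar_eq_apolarOp, map_sum]
  refine sum_eq_zero fun j hj => ?_
  rw [C_mul', map_smul, ← apolar_eq_apolarOp, hq j hj, smul_zero]

theorem apolar_C_mul_X (c : ℂ) (i : Fin 2) (p : MvPolynomial (Fin 2) ℂ) :
    apolar (C c * X i) p = c • pderiv i p := by
  rw [apolar_eq_apolarOp, C_mul_X_eq_monomial, apolarOp_monomial, LinearMap.smul_apply]
  fin_cases i <;> simp [monomialOp]

theorem apolar_X_zero_lform_zero_pow (b : ℂ) (k : ℕ) : apolar (X 0) (lform 0 b ^ k) = 0 := by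
  rw [← one_mul (X 0), ← C_1, apolar_C_mul_X, pderiv_pow]
  simp [lform]

theorem apolar_dual_lform_pow (a b : ℂ) (k : ℕ) :
    apolar (C b * X 0 - C a * X 1) (lform a b ^ k) = 0 := by
  rw [sub_eq_add_neg, ← neg_mul, ← map_neg, apolar_eq_apolarOp, apolarOp_add,
    LinearMap.add_apply, ← apolar_eq_apolarOp, ← apolar_eq_apolarOp, apolar_C_mul_X,
    apolar_C_mul_X, pderiv_pow, pderiv_pow]
  simp [lform, smul_eq_C_mul]
  ring

theorem coeff_eq_zero_of_apolar_eq_zero {h p : MvPolynomial (Fin 2) ℂ} (hap : apolar h p = 0)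
    {μ₀ ν : Fin 2 →₀ ℕ} (hp : coeff (ν + μ₀) p ≠ 0)
    (hothers : ∀ μ ∈ h.support, μ ≠ μ₀ → coeff (ν + μ) p = 0) : coeff μ₀ h = 0 := by
  by_contra hμ₀
  have hcoeff := congrArg (coeff ν) hap
  rw [apolar_eq_apolarOp, apolarOp, LinearMap.sum_apply, coeff_sum,
    sum_eq_single_of_mem μ₀ (mem_support_iff.mpr hμ₀)] at hcoeff
  · rw [LinearMap.smul_apply, coeff_smul, coeff_monomialOp, smul_eq_mul, coeff_zero] at hcoeff
    refine hμ₀ ((mul_eq_zero.mp hcoeff).resolve_right (mul_ne_zero hp ?_))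
    exact Nat.cast_ne_zero.mpr (mul_ne_zero (Nat.descFactorial_pos.mpr le_add_self).ne'
      (Nat.descFactorial_pos.mpr le_add_self).ne')
  · intro μ hμ hne
    rw [LinearMap.smul_apply, coeff_smul, coeff_monomialOp, hothers μ hμ hne, zero_mul, smul_zero]

theorem coeff_single_one_eq_zero_of_apolar {m n : ℕ} {g h : MvPolynomial (Fin 2) ℂ}
    (hg₀ : coeff (Finsupp.single 0 n) g ≠ 0) (hh : h.IsHomogeneous m)
    (hap : apolar h (X 1 ^ m * g) = 0) : coeff (Finsupp.single 1 m) h = 0 := by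
  refine coeff_eq_zero_of_apolar_eq_zero hap (ν := Finsupp.single 0 n) ?_ fun μ hμ hne => ?_
  · rwa [coeff_add_single_X_pow_mul]
  · have hdeg := hh.apply_zero_add_apply_one hμ
    have hμ₁ : μ 1 < m := by
      by_contra! hμ₁
      exact hne (Finsupp.fin_two_ext (by simp; omega) (by simp; omega))
    exact coeff_X_pow_mul_of_lt g (by simpa using hμ₁)

theorem coeff_eq_zero_of_apolar_of_apply_zero_eq_one {m n : ℕ} {g h : MvPolynomial (Fin 2) ℂ}
    (hg₀ : coeff (Finsupp.single 0 n) g ≠ 0) (hh : h.IsHomogeneous m)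
    (hap : apolar h (X 1 ^ m * g) = 0) (hn : 1 ≤ n) {μ₀ : Fin 2 →₀ ℕ} (hμ₀ : μ₀ 0 = 1) :
    coeff μ₀ h = 0 := by
  by_contra hne₀
  have hdeg₀ := hh.apply_zero_add_apply_one (mem_support_iff.mpr hne₀)
  have hA := coeff_single_one_eq_zero_of_apolar hg₀ hh hap
  refine hne₀ (coeff_eq_zero_of_apolar_eq_zero hap
    (ν := Finsupp.single 0 (n - 1) + Finsupp.single 1 1) ?_ fun μ hμ hne => ?_)
  · have : Finsupp.single 0 (n - 1) + Finsupp.single 1 1 + μ₀ =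
        Finsupp.single 0 n + Finsupp.single 1 m :=
      Finsupp.fin_two_ext (by simp; omega) (by simp; omega)
    rwa [this, coeff_add_single_X_pow_mul]
  · have hdeg := hh.apply_zero_add_apply_one hμ
    have hμ₁ : μ 1 + 1 < m := by
      by_contra! hμ₁
      rcases (by omega : μ 1 = m ∨ μ 1 = m - 1) with hμ₁ | hμ₁
      · have : μ = Finsupp.single 1 m := Finsupp.fin_two_ext (by simp; omega) (by simp; omega)
        exact mem_support_iff.mp hμ (this ▸ hA)
      · exact hne (Finsupp.fin_two_ext (by omega) (by omega))
    exact coeff_X_pow_mul_of_lt g (by simpa [add_comm] using hμ₁)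

theorem X_zero_sq_dvd_of_apolar {m n : ℕ} {g h : MvPolynomial (Fin 2) ℂ}
    (hg₀ : coeff (Finsupp.single 0 n) g ≠ 0) (hh : h.IsHomogeneous m)
    (hap : apolar h (X 1 ^ m * g) = 0) (hn : 1 ≤ n) : X 0 ^ 2 ∣ h := by
  refine X_pow_dvd_of_le_apply fun μ hμ => ?_
  by_contra! hμ₀
  have hdeg := hh.apply_zero_add_apply_one hμ
  refine mem_support_iff.mp hμ ?_
  rcases (by omega : μ 0 = 0 ∨ μ 0 = 1) with hμ₀ | hμ₀
  · have : μ = Finsupp.single 1 m := Finsupp.fin_two_ext (by simp; omega) (by simp; omega)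
    exact this ▸ coeff_single_one_eq_zero_of_apolar hg₀ hh hap
  · exact coeff_eq_zero_of_apolar_of_apply_zero_eq_one hg₀ hh hap hn hμ₀

theorem exists_apolar_sum_pow_not_X_zero_sq_dvd {m : ℕ} (lam a b : Fin m → ℂ) (d : ℕ) :
    ∃ h : MvPolynomial (Fin 2) ℂ, h.IsHomogeneous m ∧
      apolar h (∑ j, C (lam j) * lform (a j) (b j) ^ d) = 0 ∧ ¬ X 0 ^ 2 ∣ h := by
  classical
  set T := univ.filter fun j => a j ≠ 0
  set P : MvPolynomial (Fin 2) ℂ := ∏ j ∈ T, (C (b j) * X 0 - C (a j) * X 1)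
  have hP_hom : P.IsHomogeneous #T := by
    simpa using IsHomogeneous.prod T _ (fun _ => 1)
      fun j _ => (isHomogeneous_C_mul_X (b j) 0).sub (isHomogeneous_C_mul_X (a j) 1)
  have hP_apolar : ∀ j ∈ T, apolar P (lform (a j) (b j) ^ d) = 0 := fun j hj =>
    apolar_eq_zero_of_dvd (dvd_prod_of_mem _ hj) (apolar_dual_lform_pow (a j) (b j) d)
  have hP_eval : eval ![0, 1] P ≠ 0 := by
    rw [map_prod, prod_ne_zero_iff]
    intro j hj
    simpa using (mem_filter.mp hj).2
  rcases (card_le_univ T).eq_or_lt with hT | hT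
  · have hT_univ : T = univ := eq_univ_of_card T hT
    refine ⟨P, by simpa [hT] using hP_hom,
      apolar_sum_C_mul_eq_zero lam fun j _ => hP_apolar j (hT_univ ▸ mem_univ j), fun hdvd => ?_⟩
    exact not_X_dvd_of_eval_ne_zero (v := ![0, 1]) rfl hP_eval
      ((dvd_pow_self _ two_ne_zero).trans hdvd)
  · rw [Fintype.card_fin] at hT
    refine ⟨X 0 * (X 1 ^ (m - #T - 1) * P), ?_, apolar_sum_C_mul_eq_zero lam fun j _ => ?_, ?_⟩
    · convert (isHomogeneous_X ℂ 0).mul ((isHomogeneous_X_pow 1 _).mul hP_hom) using 1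
      omega
    · by_cases hj : j ∈ T
      · exact apolar_eq_zero_of_dvd (dvd_mul_of_dvd_right (dvd_mul_left _ _) _) (hP_apolar j hj)
      · have haj : a j = 0 := by simpa [T] using hj
        rw [haj]
        exact apolar_eq_zero_of_dvd (dvd_mul_right _ _) (apolar_X_zero_lform_zero_pow (b j) d)
    · rw [pow_two, mul_dvd_mul_iff_left (X_ne_zero 0)]
      refine not_X_dvd_of_eval_ne_zero (v := ![0, 1]) rfl ?_
      simpa using hP_eval

end Apolarity

open Apolarity

theorem apolar_divisible_sq_general (m d : ℕ) (hd : m + 1 ≤ d)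
    (g f : MvPolynomial (Fin 2) ℂ) (hg : g.IsHomogeneous (d - m))
    (hgy : ¬ (X 1 : MvPolynomial (Fin 2) ℂ) ∣ g)
    (hf : f = X 1 ^ m * g) :
    (∀ h : MvPolynomial (Fin 2) ℂ, h.IsHomogeneous m → apolar h f = 0 →
      (X 0 : MvPolynomial (Fin 2) ℂ) ^ 2 ∣ h) ∧
    ¬ ∃ lam a b : Fin m → ℂ, f = ∑ j, C (lam j) * lform (a j) (b j) ^ d := by
  subst hf
  have x_sq_dvd : ∀ h : MvPolynomial (Fin 2) ℂ, h.IsHomogeneous m → apolar h (X 1 ^ m * g) = 0 →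
      X 0 ^ 2 ∣ h := fun h hh hap =>
    X_zero_sq_dvd_of_apolar (hg.coeff_single_zero_ne_zero hgy) hh hap (by omega)
  refine ⟨x_sq_dvd, ?_⟩
  rintro ⟨lam, a, b, hrep⟩
  obtain ⟨h, hh, hap, hndvd⟩ := exists_apolar_sum_pow_not_X_zero_sq_dvd lam a b d
  exact hndvd (x_sq_dvd h hh (hrep ▸ hap))

/-- If `f = y^m g` with `y ∤ g` (and `deg f = d ≥ m + 1`), then every degree-`m` form
apolar to `f` is divisible by `x²`; in particular `f` is not a sum of `m` `d`-th powers
of linear forms. -/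
theorem apolar_divisible_sq (m d : ℕ) (hm : 1 ≤ m) (hd : m + 1 ≤ d)
    (g f : MvPolynomial (Fin 2) ℂ) (hg : g.IsHomogeneous (d - m))
    (hgy : ¬ (X 1 : MvPolynomial (Fin 2) ℂ) ∣ g)
    (hf : f = X 1 ^ m * g) :
    (∀ h : MvPolynomial (Fin 2) ℂ, h.IsHomogeneous m → apolar h f = 0 →
      (X 0 : MvPolynomial (Fin 2) ℂ) ^ 2 ∣ h) ∧
    ¬ ∃ lam a b : Fin m → ℂ, f = ∑ j, C (lam j) * lform (a j) (b j) ^ d :=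
  apolar_divisible_sq_general m d hd g f hg hgy hf
end

section
/- Let d ≥ 3 and let f(x,y) = ℓ(x,y)^{d−2} p(x,y) ∈ ℝ[x,y], where ℓ is a nonzero real linear form and p is an irreducible real quadratic form (a real quadratic form with no real roots). Then L_ℝ(f) = d − 1. -/
open MvPolynomial Finset

/-!
Upper bound. By Lagrange's identity `4 p(b,-a) p = m² - disc(p) ℓ²` for a linear form `m`, and
`disc(p) < 0` since `p` is anisotropic; so up to a constant and a rescaling of `ℓ`,
`f = ℓ^(d-2) (ℓ² + m²)`. Expanding binomially, `x^(d-2) (x² + y²) = ∑ₜ wₜ (x + t y)^d` as soon as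
the moments `∑ₜ wₜ tᵏ`, `k ≤ d`, are those of the functional `g ↦ g(0) + g''(0) / (d (d-1))`.
A quadrature rule for this functional with `2m` real nodes, exact up to degree `2m + 1`, comes
from Lagrange interpolation at the roots of an even polynomial `q` with
`q(0) + q''(0) / (d (d-1)) = 0`. For `m = ⌊(d-1)/2⌋` this gives `d - 1` terms, one of which is
`y^d` when `d` is even.

Lower bound. The derivative along `(b, -a)` kills `ℓ = a x + b y`. Applied to a decomposition
`f = ∑ᵢ λᵢ ℓᵢ^d` with at most `d - 2` terms, it gives `ℓ^(d-2) h`, where `h(b,-a) = 2 p(b,-a) ≠ 0`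
by Euler's identity, as a sum of at most `d - 2` powers of forms not proportional to `ℓ`. Killing
these one at a time lowers the exponent of `ℓ` by one per term and keeps the cofactor nonzero at
`(b,-a)`, until `ℓ^k h = 0` with `h ≠ 0`.
-/

open scoped Polynomial

namespace Polynomial

theorem exists_quadrature {F : Type*} [Field F] [DecidableEq F] (L : F[X] →ₗ[F] F)
    (T : Finset F) {q : F[X]} (hq : q.Monic) (hqT : q.natDegree = #T)
    (hroot : ∀ t ∈ T, q.eval t = 0) {e : ℕ} (hL : ∀ h : F[X], h.natDegree ≤ e → L (q * h) = 0) :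
    ∃ w : F → F, ∀ g : F[X], g.natDegree ≤ #T + e → L g = ∑ t ∈ T, w t * g.eval t := by
  refine ⟨fun t => L (Lagrange.basis T id t), fun g hg => ?_⟩
  have hdiv : g %ₘ q + q * (g /ₘ q) = g := modByMonic_add_div g q
  have hrem : g %ₘ q = Lagrange.interpolate T id (fun t => (g %ₘ q).eval t) :=
    Lagrange.eq_interpolate (Set.injOn_id _)
      ((degree_modByMonic_lt g hq).trans_eq (by rw [degree_eq_natDegree hq.ne_zero, hqT]))
  have hquot : L (q * (g /ₘ q)) = 0 := hL _ (by rw [natDegree_divByMonic g hq, hqT]; omega)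
  have heval : ∀ t ∈ T, (g %ₘ q).eval t = g.eval t := fun t ht => by
    conv_rhs => rw [← hdiv, eval_add, eval_mul, hroot t ht, zero_mul, add_zero]
  calc L g = L (g %ₘ q) := by conv_lhs => rw [← hdiv, map_add, hquot, add_zero]
    _ = ∑ t ∈ T, L (Lagrange.basis T id t) * g.eval t := by
      rw [hrem, Lagrange.interpolate_apply, map_sum]
      refine sum_congr rfl fun t ht => ?_
      rw [← smul_eq_C_mul, map_smul, smul_eq_mul, mul_comm, heval t ht]

theorem coeff_prod_X_sq_sub_C {K : Type*} [Field K] (x : ℕ → K) (hx : ∀ i, x i ≠ 0) (m : ℕ) :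
    (∏ i ∈ range m, (X ^ 2 - C (x i))).coeff 1 = 0 ∧
      (∏ i ∈ range m, (X ^ 2 - C (x i))).coeff 2 =
        -(∑ i ∈ range m, (x i)⁻¹) * (∏ i ∈ range m, (X ^ 2 - C (x i))).coeff 0 := by
  induction m with
  | zero => simp [coeff_one]
  | succ m ih =>
    simp only [prod_range_succ, sum_range_succ, mul_sub, coeff_sub, coeff_mul_C,
      coeff_mul_X_pow', ih.1, ih.2, Nat.not_ofNat_le_one, reduceIte, le_refl, tsub_self,
      nonpos_iff_eq_zero, OfNat.ofNat_ne_zero, zero_mul, sub_self, mul_zero, true_and]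
    field_simp [hx m]
    ring

theorem exists_nodes_coeff_zero_add_mul_coeff_two_eq_zero {c : ℝ} (hc : 0 < c) {m : ℕ}
    (hm : m ≠ 0) :
    ∃ (T : Finset ℝ) (q : ℝ[X]), #T = 2 * m ∧ q.Monic ∧ q.natDegree = #T ∧
      (∀ t ∈ T, q.eval t = 0) ∧ q.coeff 1 = 0 ∧ q.coeff 0 + c * q.coeff 2 = 0 := by
  -- nodes `±ρ, ±2ρ, …, ±mρ`; the scale `ρ` makes `∑ᵢ (ρ (i+1))⁻² = c⁻¹`
  set S : ℝ := ∑ i ∈ range m, ((i + 1 : ℝ) ^ 2)⁻¹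
  have hS : 0 < S := sum_pos (fun i _ => by positivity) (nonempty_range_iff.2 hm)
  set ρ := √(c * S)
  have hρ : 0 < ρ := Real.sqrt_pos.2 (mul_pos hc hS)
  set x : ℕ → ℝ := fun i => (ρ * (i + 1)) ^ 2
  have hsum : ∑ i ∈ range m, (x i)⁻¹ = c⁻¹ := by
    simp only [x, mul_pow, mul_inv, ← mul_sum, Real.sq_sqrt (mul_pos hc hS).le, ρ]
    rw [mul_assoc, inv_mul_cancel₀ hS.ne', mul_one]
  obtain ⟨hq1, hq2⟩ := coeff_prod_X_sq_sub_C x (fun i => by positivity) m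
  have hmonic : ∀ i ∈ range m, (X ^ 2 - C (x i)).Monic := fun i _ =>
    monic_X_pow_sub_C _ two_ne_zero
  set T := ((Icc (-(m : ℤ)) m).erase 0).image (fun k : ℤ => ρ * k)
  have hT : #T = 2 * m := by
    rw [card_image_of_injective _ (fun k l h => by exact_mod_cast mul_left_cancel₀ hρ.ne' h),
      card_erase_of_mem (by simp), Int.card_Icc]
    omega
  refine ⟨T, _, hT, monic_prod_of_monic _ _ hmonic, ?_, ?_, hq1, ?_⟩
  · simp [natDegree_prod_of_monic _ _ hmonic, hT, mul_comm]
  · simp only [T, mem_image, mem_erase, mem_Icc]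
    rintro _ ⟨k, ⟨hk0, hk⟩, rfl⟩
    rw [eval_prod]
    refine prod_eq_zero (i := k.natAbs - 1) (mem_range.2 (by omega)) ?_
    have : ((k.natAbs - 1 : ℕ) + 1 : ℝ) ^ 2 = (k : ℝ) ^ 2 := by
      rw [← Nat.cast_add_one, Nat.sub_add_cancel (Int.natAbs_pos.2 hk0), Nat.cast_natAbs,
        Int.cast_abs, sq_abs]
    simp [x, mul_pow, this]
  · rw [hq2, hsum]
    field_simp
    ring

theorem exists_quadrature_coeff_zero_add_mul_coeff_two {c : ℝ} (hc : 0 < c) {m : ℕ}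
    (hm : m ≠ 0) : ∃ T : Finset ℝ, #T = 2 * m ∧ ∃ w : ℝ → ℝ, ∀ g : ℝ[X],
      g.natDegree ≤ 2 * m + 1 → g.coeff 0 + c * g.coeff 2 = ∑ t ∈ T, w t * g.eval t := by
  obtain ⟨T, q, hT, hq, hqT, hroot, hq1, hq0⟩ :=
    exists_nodes_coeff_zero_add_mul_coeff_two_eq_zero hc hm
  have hL : ∀ h : ℝ[X], h.natDegree ≤ 1 → (lcoeff ℝ 0 + c • lcoeff ℝ 2) (q * h) = 0 := by
    intro h hh
    obtain ⟨h₁, h₀, rfl⟩ := exists_eq_X_add_C_of_natDegree_le_one hh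
    simp only [mul_add, ← mul_assoc, LinearMap.add_apply, LinearMap.smul_apply, lcoeff_apply,
      coeff_add, mul_coeff_zero, coeff_C_zero, coeff_X_zero, coeff_mul_X, coeff_mul_C, hq1,
      mul_zero, zero_mul, zero_add, smul_eq_mul]
    linear_combination h₀ * hq0
  obtain ⟨w, hw⟩ := exists_quadrature _ T hq hqT hroot hL
  exact ⟨T, hT, w, fun g hg => by simpa using hw g (by omega)⟩

end Polynomial

section Waring

variable {R : Type*} [CommRing R] [Algebra ℝ R]

theorem sum_smul_add_smul_pow (T : Finset ℝ) (w : ℝ → ℝ) (x y : R) (d : ℕ) :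
    ∑ t ∈ T, w t • (x + t • y) ^ d =
      ∑ k ∈ range (d + 1), (∑ t ∈ T, w t * t ^ k) • (y ^ k * x ^ (d - k) * d.choose k) := by
  simp_rw [add_comm x, add_pow, smul_pow, smul_sum, sum_smul, smul_mul_assoc, smul_smul]
  exact sum_comm

theorem sum_smul_add_smul_pow_eq {d : ℕ} (hd : 3 ≤ d) (T : Finset ℝ) (w : ℝ → ℝ)
    (hw : ∀ g : ℝ[X], g.natDegree < d →
      g.coeff 0 + (d.choose 2 : ℝ)⁻¹ * g.coeff 2 = ∑ t ∈ T, w t * g.eval t) (x y : R) :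
    ∑ t ∈ T, w t • (x + t • y) ^ d =
      x ^ (d - 2) * (x ^ 2 + y ^ 2) + (∑ t ∈ T, w t * t ^ d) • y ^ d := by
  have hmoment : ∀ k < d, ∑ t ∈ T, w t * t ^ k =
      (if k = 0 then 1 else 0) + (d.choose 2 : ℝ)⁻¹ * (if k = 2 then 1 else 0) := fun k hk => by
    simpa [Polynomial.coeff_X_pow, eq_comm] using (hw (.X ^ k) (by simpa using hk)).symm
  rw [sum_smul_add_smul_pow, sum_range_succ,
    sum_congr rfl fun k hk => by rw [hmoment k (mem_range.1 hk)]]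
  have hchoose : (d.choose 2 : ℝ)⁻¹ • (d.choose 2 : R) = 1 := by
    rw [← map_natCast (algebraMap ℝ R), Algebra.smul_def, ← map_mul,
      inv_mul_cancel₀ (Nat.cast_ne_zero.2 (Nat.choose_pos (by omega)).ne'), map_one]
  simp only [add_smul, sum_add_distrib, mul_smul, ite_smul, one_smul, zero_smul, smul_ite,
    smul_zero, sum_ite_eq', mem_range, if_pos (by omega : 0 < d), if_pos (by omega : 2 < d)]
  rw [← mul_smul_comm, hchoose]
  have hpow : x ^ d = x ^ (d - 2) * x ^ 2 := by rw [← pow_add, Nat.sub_add_cancel (by omega)]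
  simp only [pow_zero, Nat.sub_zero, Nat.choose_zero_right, Nat.sub_self, Nat.choose_self,
    Nat.cast_one, one_mul, mul_one, hpow]
  ring

theorem exists_sum_smul_pow_eq_pow_mul_sq_add_sq {d : ℕ} (hd : 3 ≤ d) (x y : R) :
    ∃ (s : Finset (Option ℝ)) (lam A B : Option ℝ → ℝ), #s = d - 1 ∧
      x ^ (d - 2) * (x ^ 2 + y ^ 2) = ∑ i ∈ s, lam i • (A i • x + B i • y) ^ d := by
  obtain ⟨T, hT, w, hw⟩ := Polynomial.exists_quadrature_coeff_zero_add_mul_coeff_two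
    (inv_pos.2 (Nat.cast_pos.2 (Nat.choose_pos (by omega : 2 ≤ d)))) (m := (d - 1) / 2) (by omega)
  have hexpand := sum_smul_add_smul_pow_eq hd T w (fun g hg => hw g (by omega)) x y
  set μ := ∑ t ∈ T, w t * t ^ d
  -- `none` indexes the term `y ^ d`, needed only for even `d`, where the `d - 2` nodes are exact
  -- only up to degree `d - 1`
  refine ⟨if Even d then T.insertNone else T.map .some, fun i => i.elim (-μ) w,
    fun i => i.elim 0 1, fun i => i.elim 1 id, ?_⟩
  split_ifs with hd2
  · refine ⟨by rw [card_insertNone, hT]; grind, ?_⟩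
    simp [sum_insertNone, hexpand]
  · have hμ : μ = 0 := by
      simpa [Polynomial.coeff_X_pow, show 0 ≠ d by omega, show 2 ≠ d by omega, eq_comm] using
        hw (.X ^ d) (by rw [Polynomial.natDegree_X_pow]; grind)
    refine ⟨by rw [card_map, hT]; grind, ?_⟩
    simp [hexpand, hμ]

end Waring

section DirDeriv

variable {σ R : Type*} [Fintype σ] [CommRing R]

noncomputable def dirDeriv (v : σ → R) : Derivation R (MvPolynomial σ R) (MvPolynomial σ R) :=
  ∑ i, v i • pderiv i

theorem dirDeriv_apply (v : σ → R) (p : MvPolynomial σ R) :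
    dirDeriv v p = ∑ i, v i • pderiv i p := by
  rw [dirDeriv, ← Derivation.coeFnAddMonoidHom_apply, map_sum, Finset.sum_apply]
  rfl

theorem eval_dirDeriv_self {v : σ → R} {p : MvPolynomial σ R} {n : ℕ} (hp : p.IsHomogeneous n) :
    eval v (dirDeriv v p) = n * eval v p := by
  simpa [dirDeriv_apply, smul_eq_C_mul] using congrArg (eval v) hp.sum_X_mul_pderiv

end DirDeriv

theorem dirDeriv_lformR (u v a b : ℝ) : dirDeriv ![u, v] (lformR a b) = C (u * a + v * b) := by
  simp [dirDeriv_apply, lformR, smul_eq_C_mul]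

theorem dirDeriv_C_mul_lformR_pow (u v c a b : ℝ) (e : ℕ) :
    dirDeriv ![u, v] (C c * lformR a b ^ e) =
      C (c * e * (u * a + v * b)) * lformR a b ^ (e - 1) := by
  simp only [Derivation.leibniz, Derivation.leibniz_pow, dirDeriv_lformR, derivation_C,
    smul_eq_mul, nsmul_eq_mul, mul_zero, add_zero, map_mul, map_natCast]
  ring

theorem eval_lformR (a b : ℝ) (v : Fin 2 → ℝ) : eval v (lformR a b) = a * v 0 + b * v 1 := by
  simp [lformR]

theorem lformR_ne_zero {a b : ℝ} (hab : (a, b) ≠ (0, 0)) : lformR a b ≠ 0 := by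
  intro h
  have := congrArg (eval ![a, b]) h
  simp only [eval_lformR, Matrix.cons_val_zero, Matrix.cons_val_one, Matrix.cons_val_fin_one,
    map_zero] at this
  exact hab (Prod.ext (by nlinarith) (by nlinarith))

theorem eval_perp_lformR (a b : ℝ) : eval ![b, -a] (lformR a b) = 0 := by
  simp [eval_lformR, mul_comm]

theorem lt_card_of_pow_mul_eq_sum {ι : Type*} [DecidableEq ι] {a b : ℝ} (hℓ : lformR a b ≠ 0)
    {A B : ι → ℝ} (s : Finset ι) (hs : ∀ i ∈ s, B i * a - A i * b ≠ 0) {k e : ℕ}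
    {h : MvPolynomial (Fin 2) ℝ} (hh : eval ![b, -a] h ≠ 0) {lam : ι → ℝ}
    (heq : lformR a b ^ k * h = ∑ i ∈ s, C (lam i) * lformR (A i) (B i) ^ e) : k < #s := by
  induction s using Finset.induction_on generalizing k e h lam with
  | empty =>
    refine absurd heq (mul_ne_zero (pow_ne_zero k hℓ) fun h0 => hh ?_)
    simp [h0]
  | insert j s hj ih =>
    obtain _ | k := k
    · simp
    -- the derivative along `(B j, -A j)` kills the `j`-th term; the new cofactor of `ℓ ^ k`
    -- is `(k + 1) δ h` modulo `ℓ`, so it still does not vanish at `(b, -a)`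
    set δ := B j * a - A j * b
    have hD := congrArg (dirDeriv ![B j, -A j]) heq
    rw [sum_insert hj, map_add, map_sum, dirDeriv_C_mul_lformR_pow,
      show B j * A j + -A j * B j = 0 by ring, mul_zero, C_0, zero_mul, zero_add,
      Derivation.leibniz, Derivation.leibniz_pow, dirDeriv_lformR] at hD
    simp only [dirDeriv_C_mul_lformR_pow] at hD
    rw [card_insert_of_notMem hj, Nat.add_lt_add_iff_right]
    refine ih (fun i hi => hs i (mem_insert_of_mem hi))
      (h := C ((k + 1) * δ) * h + lformR a b * dirDeriv ![B j, -A j] h) ?_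
      (lam := fun i => lam i * e * (B j * A i + -A j * B i)) (.trans ?_ hD)
    · simpa [eval_perp_lformR, hh] using ⟨k.cast_add_one_ne_zero, hs j (mem_insert_self j s)⟩
    · simp only [smul_eq_mul, nsmul_eq_mul, Nat.add_sub_cancel, Nat.cast_add, Nat.cast_one,
        map_mul, map_add, map_neg, map_natCast, map_one, δ, sub_eq_add_neg]
      ring

theorem lt_card_of_pow_mul_eq_sum_of_isHomogeneous {ι : Type*} [DecidableEq ι] {a b : ℝ}
    (hab : (a, b) ≠ (0, 0)) {p : MvPolynomial (Fin 2) ℝ} {n : ℕ} (hp : p.IsHomogeneous n)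
    (hn : n ≠ 0) (hpw : eval ![b, -a] p ≠ 0) {k e : ℕ} (s : Finset ι) {lam A B : ι → ℝ}
    (heq : lformR a b ^ k * p = ∑ i ∈ s, C (lam i) * lformR (A i) (B i) ^ e) : k < #s := by
  have hD := congrArg (dirDeriv ![b, -a]) heq
  rw [Derivation.leibniz, Derivation.leibniz_pow, dirDeriv_lformR,
    show b * a + -a * b = 0 by ring, C_0, smul_zero, smul_zero, smul_zero, add_zero, smul_eq_mul,
    map_sum, ← sum_filter_of_ne (p := fun i => B i * a - A i * b ≠ 0) fun i _ hi hBA => hi (by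
      rw [dirDeriv_C_mul_lformR_pow, show b * A i + -a * B i = -(B i * a - A i * b) by ring, hBA]
      simp)] at hD
  simp only [dirDeriv_C_mul_lformR_pow] at hD
  refine (lt_card_of_pow_mul_eq_sum (lformR_ne_zero hab) _ (fun i hi => (mem_filter.1 hi).2)
    ?_ hD).trans_le (card_filter_le _ _)
  rw [eval_dirDeriv_self hp]
  exact mul_ne_zero (Nat.cast_ne_zero.2 hn) hpw

noncomputable def qformR (A B C' : ℝ) : MvPolynomial (Fin 2) ℝ :=
  C A * X 0 ^ 2 + C B * X 0 * X 1 + C C' * X 1 ^ 2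

theorem eval_qformR (A B C' : ℝ) (v : Fin 2 → ℝ) :
    eval v (qformR A B C') = A * v 0 ^ 2 + B * v 0 * v 1 + C' * v 1 ^ 2 := by
  simp [qformR]

theorem exists_eq_qformR_of_isHomogeneous_two {p : MvPolynomial (Fin 2) ℝ}
    (hp : p.IsHomogeneous 2) : ∃ A B C' : ℝ, p = qformR A B C' := by
  -- the second partials are constants, and Euler's identity, used twice, recovers `p` from them
  have hconst : ∀ i j, ∃ c, pderiv j (pderiv i p) = C c := fun i j =>
    ⟨_, totalDegree_eq_zero_iff_eq_C.1 ((totalDegree_zero_iff_isHomogeneous _).2 hp.pderiv.pderiv)⟩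
  choose c hc using hconst
  have h2 := hp.sum_X_mul_pderiv
  have h1 := fun i => (hp.pderiv (i := i)).sum_X_mul_pderiv
  simp only [Fin.sum_univ_two, hc, Nat.add_one_sub_one, one_smul] at h1 h2
  refine ⟨c 0 0 / 2, (c 0 1 + c 1 0) / 2, c 1 1 / 2, ?_⟩
  have hC : (C 2⁻¹ * 2 : MvPolynomial (Fin 2) ℝ) = 1 := by
    rw [← map_ofNat C 2, ← C_mul, inv_mul_cancel₀ two_ne_zero, C_1]
  simp only [qformR, div_eq_mul_inv, C_mul, C_add]
  linear_combination (-C 2⁻¹) * h2 + (-C 2⁻¹ * X 0) * h1 0 + (-C 2⁻¹ * X 1) * h1 1 - p * hC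

/-- Lagrange's identity `4 q(w) q(x) = (2 β(w, x))² - disc(q) det(w, x)²` for the polar form `β`
of `q`, at `w = (b, -a)`. -/
theorem C_mul_qformR_eq_sq_sub_C_discrim_mul_sq (A B C' a b : ℝ) :
    C (4 * eval ![b, -a] (qformR A B C')) * qformR A B C' =
      lformR (2 * A * b - B * a) (B * b - 2 * C' * a) ^ 2 -
        C (discrim A B C') * lformR a b ^ 2 := by
  rw [eval_qformR]
  simp only [qformR, lformR, discrim, Matrix.cons_val_zero, Matrix.cons_val_one,
    Matrix.cons_val_fin_one, map_mul, map_sub, map_add, map_pow, map_neg, map_ofNat]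
  ring

theorem discrim_lt_zero_of_forall_ne_zero {a b c : ℝ} (ha : a ≠ 0)
    (h : ∀ x, a * (x * x) + b * x + c ≠ 0) : discrim a b c < 0 := by
  by_contra! hd
  obtain ⟨x, hx⟩ := exists_quadratic_eq_zero ha ⟨√(discrim a b c), (Real.mul_self_sqrt hd).symm⟩
  exact h x hx

theorem discrim_lt_zero_of_anisotropic {A B C' : ℝ}
    (hq : ∀ v : Fin 2 → ℝ, eval v (qformR A B C') = 0 → v = 0) : discrim A B C' < 0 := by
  refine discrim_lt_zero_of_forall_ne_zero (fun hA => ?_) fun x hx => ?_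
  · have := congrFun (hq ![1, 0] (by simp [eval_qformR, hA])) 0
    simp at this
  · have := congrFun (hq ![x, 1] (by
      simp only [eval_qformR, Matrix.cons_val_zero, Matrix.cons_val_one, Matrix.cons_val_fin_one]
      linear_combination hx)) 1
    simp at this

theorem exists_waring_C_mul_pow_mul_sq_add_sq {d : ℕ} (hd : 3 ≤ d) (a b c e κ : ℝ) :
    ∃ lam A B : Fin (d - 1) → ℝ,
      C κ * (lformR a b ^ (d - 2) * (lformR a b ^ 2 + lformR c e ^ 2)) =
        ∑ j, C (lam j) * lformR (A j) (B j) ^ d := by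
  obtain ⟨s, lam, A, B, hs, h⟩ :=
    exists_sum_smul_pow_eq_pow_mul_sq_add_sq hd (lformR a b) (lformR c e)
  rw [← hs]
  set i := s.equivFin.symm
  refine ⟨fun j => κ * lam (i j), fun j => A (i j) * a + B (i j) * c,
    fun j => A (i j) * b + B (i j) * e, ?_⟩
  rw [h, mul_sum, ← sum_coe_sort s, ← Equiv.sum_comp i]
  refine sum_congr rfl fun j _ => ?_
  simp only [lformR, smul_eq_C_mul, map_mul, map_add]
  ring

theorem exists_waring_pow_mul_qformR {d : ℕ} (hd : 3 ≤ d) {a b A B C' : ℝ}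
    (hσ : eval ![b, -a] (qformR A B C') ≠ 0) (hdisc : discrim A B C' < 0) :
    ∃ lam A' B' : Fin (d - 1) → ℝ,
      lformR a b ^ (d - 2) * qformR A B C' = ∑ j, C (lam j) * lformR (A' j) (B' j) ^ d := by
  set σ := eval ![b, -a] (qformR A B C')
  set s := √(-discrim A B C')
  have hs0 : s ≠ 0 := (Real.sqrt_pos.2 (by linarith)).ne'
  have hs : (C s ^ 2 : MvPolynomial (Fin 2) ℝ) = -C (discrim A B C') := by
    rw [← map_pow, Real.sq_sqrt (by linarith), map_neg]
  set κ := (4 * σ * s ^ (d - 2))⁻¹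
  have hκ : (C κ * C s ^ (d - 2) * C (4 * σ) : MvPolynomial (Fin 2) ℝ) = 1 := by
    rw [← map_pow, ← map_mul, ← map_mul, ← C_1]
    congr 1
    simp only [κ]
    field_simp
  have hL : lformR (s * a) (s * b) = C s * lformR a b := by
    simp only [lformR, map_mul]
    ring
  obtain ⟨lam, A', B', h⟩ := exists_waring_C_mul_pow_mul_sq_add_sq hd (s * a) (s * b)
    (2 * A * b - B * a) (B * b - 2 * C' * a) κ
  refine ⟨lam, A', B', h ▸ ?_⟩
  rw [hL]
  linear_combination (C κ * C s ^ (d - 2) * lformR a b ^ (d - 2)) *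
      C_mul_qformR_eq_sq_sub_C_discrim_mul_sq A B C' a b -
    (C κ * C s ^ (d - 2) * lformR a b ^ (d - 2) * lformR a b ^ 2) * hs -
    (lformR a b ^ (d - 2) * qformR A B C') * hκ

/-- `L_ℝ(ℓ^(d-2) p) = d - 1` for a nonzero real linear form `ℓ` and an irreducible real
quadratic form `p` (no nontrivial real zeros). -/
theorem real_rank_linear_times_quadratic (d : ℕ) (hd : 3 ≤ d)
    (a b : ℝ) (hab : (a, b) ≠ (0, 0))
    (p : MvPolynomial (Fin 2) ℝ) (hp2 : p.IsHomogeneous 2)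
    (hirr : ∀ v : Fin 2 → ℝ, eval v p = 0 → v = 0)
    (f : MvPolynomial (Fin 2) ℝ) (hf : f = lformR a b ^ (d - 2) * p) :
    rankR d f = d - 1 := by
  have hσ : eval ![b, -a] p ≠ 0 := fun h => hab (by
    have := hirr _ h
    simpa using And.intro (congrFun this 1) (congrFun this 0))
  obtain ⟨A, B, C', rfl⟩ := exists_eq_qformR_of_isHomogeneous_two hp2
  have hupper := hf ▸ exists_waring_pow_mul_qformR hd hσ (discrim_lt_zero_of_anisotropic hirr)
  refine le_antisymm (Nat.sInf_le hupper) (le_csInf ⟨_, hupper⟩ fun r ⟨lam, A', B', hr⟩ => ?_)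
  have := lt_card_of_pow_mul_eq_sum_of_isHomogeneous hab hp2 two_ne_zero hσ univ (hf ▸ hr)
  rw [card_univ, Fintype.card_fin] at this
  omega
end
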